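/- arXiv:math/9411219 — 12 statements merged into one kernel-verified Lean document; each statement's English description precedes it below -/
import Mathlib

section
/- Let n, v, p be natural numbers with 1 ≤ p ≤ n, and let g : Fin n → Finset (Fin v) be any pooling design. If P is a uniformly random p-element subset of Fin n, then the expected number of candidate positives satisfies (1 / (n choose p)) · Σ_{P ⊆ Fin n, |P| = p} |closure(g,P)| ≥ (n / 2^{v/p}) · (1 − 4/p) − p, where 2^{v/p} denotes the real power. -/
def poolClosure {n v : ℕ} (g : Fin n → Finset (Fin v)) (P : Finset (Fin n)) :
    Finset (Fin n) :=
  Finset.univ.filter (fun x => g x ⊆ P.biUnion g)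

lemma descFactorial_mul_pow_le (p c n : ℕ) (h : c ≤ n) :
    c.descFactorial p * n ^ p ≤ n.descFactorial p * c ^ p := by
  induction p with
  | zero => simp
  | succ p ih =>
    have key : (c - p) * n ≤ (n - p) * c := by
      have h1 : p * c ≤ p * n := Nat.mul_le_mul_left p h
      calc (c - p) * n = c * n - p * n := by rw [Nat.sub_mul]
        _ ≤ c * n - p * c := Nat.sub_le_sub_left h1 _
        _ = (n - p) * c := by rw [Nat.sub_mul, Nat.mul_comm n c]
    calc c.descFactorial (p + 1) * n ^ (p + 1)
        = ((c - p) * n) * (c.descFactorial p * n ^ p) := by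
          rw [Nat.descFactorial_succ, pow_succ]; ring
      _ ≤ ((n - p) * c) * (n.descFactorial p * c ^ p) := Nat.mul_le_mul key ih
      _ = n.descFactorial (p + 1) * c ^ (p + 1) := by
          rw [Nat.descFactorial_succ, pow_succ]; ring

lemma choose_mul_pow_le (p c n : ℕ) (h : c ≤ n) :
    c.choose p * n ^ p ≤ n.choose p * c ^ p := by
  have hd := descFactorial_mul_pow_le p c n h
  rw [Nat.descFactorial_eq_factorial_mul_choose, Nat.descFactorial_eq_factorial_mul_choose] at hd
  have h2 : Nat.factorial p * (c.choose p * n ^ p) ≤ Nat.factorial p * (n.choose p * c ^ p) := by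
    calc Nat.factorial p * (c.choose p * n ^ p) = Nat.factorial p * c.choose p * n ^ p := by ring
      _ ≤ Nat.factorial p * n.choose p * c ^ p := hd
      _ = Nat.factorial p * (n.choose p * c ^ p) := by ring
  exact Nat.le_of_mul_le_mul_left h2 (Nat.factorial_pos p)

theorem expected_candidate_positives_lower_bound
    (n v p : ℕ) (hp1 : 1 ≤ p) (hpn : p ≤ n)
    (g : Fin n → Finset (Fin v)) :
    (1 / (n.choose p : ℝ)) *
        ∑ P ∈ Finset.powersetCard p (Finset.univ : Finset (Fin n)),
          ((poolClosure g P).card : ℝ) ≥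
      ((n : ℝ) / (2 : ℝ) ^ ((v : ℝ) / (p : ℝ))) * (1 - 4 / (p : ℝ)) - (p : ℝ) := by
  classical
  have hn1 : 1 ≤ n := le_trans hp1 hpn
  have hnR : (0:ℝ) < n := by exact_mod_cast hn1
  have hpR : (0:ℝ) < p := by exact_mod_cast hp1
  set s := Finset.powersetCard p (Finset.univ : Finset (Fin n)) with hs
  set u : Finset (Fin n) → Finset (Fin v) := fun P => P.biUnion g with hu
  have hM0 : 0 < n.choose p := Nat.choose_pos hpn
  have hMR : (0:ℝ) < (n.choose p : ℝ) := by exact_mod_cast hM0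
  have hscard : s.card = n.choose p := by
    simp [hs, Finset.card_powersetCard]
  set I := s.image u with hI
  set m : Finset (Fin v) → ℕ := fun b => (s.filter fun P => u P = b).card with hm
  set c : Finset (Fin v) → ℕ := fun b => (Finset.univ.filter fun x => g x ⊆ b).card with hc
  -- closure card depends only on the union
  have hclos : ∀ P ∈ s, ∀ b, u P = b → (poolClosure g P).card = c b := by
    intro P _ b hb
    have : poolClosure g P = Finset.univ.filter fun x => g x ⊆ b := by
      apply Finset.filter_congr
      intro x _
      simp [← hb, hu]
    rw [poolClosure] at this ⊢
    rw [this]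
  have maps : ∀ P ∈ s, u P ∈ I := fun P hP => Finset.mem_image_of_mem u hP
  -- sum over fibers
  have hsum : ∑ P ∈ s, ((poolClosure g P).card : ℝ) = ∑ b ∈ I, (m b : ℝ) * (c b : ℝ) := by
    rw [← Finset.sum_fiberwise_of_maps_to maps]
    refine Finset.sum_congr rfl (fun b _ => ?_)
    have heach : ∀ P ∈ s.filter (fun P => u P = b), ((poolClosure g P).card : ℝ) = (c b : ℝ) := by
      intro P hP
      have hP' := Finset.mem_filter.mp hP
      rw [hclos P hP'.1 b hP'.2]
    rw [Finset.sum_congr rfl heach, Finset.sum_const, nsmul_eq_mul]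
  have hmsum : ∑ b ∈ I, m b = n.choose p := by
    rw [← hscard]; exact (Finset.card_eq_sum_card_fiberwise maps).symm
  -- fiber bound : m b ≤ (c b).choose p, c b ≤ n
  have hcn : ∀ b, c b ≤ n := by
    intro b
    calc c b ≤ Finset.univ.card := Finset.card_filter_le _ _
      _ = n := Finset.card_univ.trans (Fintype.card_fin n)
  have hfiber : ∀ b ∈ I, m b ≤ (c b).choose p := by
    intro b _
    have hsub : (s.filter fun P => u P = b) ⊆
        Finset.powersetCard p (Finset.univ.filter fun x => g x ⊆ b) := by
      intro Q hQ
      obtain ⟨hQs, hQb⟩ := Finset.mem_filter.mp hQ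
      rw [Finset.mem_powersetCard] at hQs ⊢
      constructor
      · intro x hx
        rw [Finset.mem_filter]
        refine ⟨Finset.mem_univ x, ?_⟩
        rw [← hQb]
        exact fun y hy => Finset.mem_biUnion.mpr ⟨x, hx, hy⟩
      · exact hQs.2
    calc m b ≤ (Finset.powersetCard p (Finset.univ.filter fun x => g x ⊆ b)).card :=
          Finset.card_le_card hsub
      _ = (c b).choose p := by rw [Finset.card_powersetCard]
  -- real weights
  set M : ℝ := (n.choose p : ℝ) with hMdef
  set w : Finset (Fin v) → ℝ := fun b => (m b : ℝ) / M with hwdef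
  have hw0 : ∀ b, 0 ≤ w b := fun b => div_nonneg (Nat.cast_nonneg _) hMR.le
  have hwsum : ∑ b ∈ I, w b = 1 := by
    rw [hwdef, ← Finset.sum_div, div_eq_one_iff_eq hMR.ne', hMdef]
    exact_mod_cast hmsum
  have hwpos : ∀ b ∈ I, 0 < w b := by
    intro b hb
    obtain ⟨P, hPs, hPb⟩ := Finset.mem_image.mp hb
    have hmb : 0 < m b := Finset.card_pos.mpr ⟨P, Finset.mem_filter.mpr ⟨hPs, hPb⟩⟩
    exact div_pos (by exact_mod_cast hmb) hMR
  -- per-class bound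
  have hkey : ∀ b ∈ I, (n:ℝ) * (w b) ^ ((p:ℝ)⁻¹) ≤ (c b : ℝ) := by
    intro b hb
    have h1 : m b * n ^ p ≤ n.choose p * (c b) ^ p :=
      le_trans (Nat.mul_le_mul_right _ (hfiber b hb)) (choose_mul_pow_le p (c b) n (hcn b))
    have h1' : (m b : ℝ) * (n:ℝ) ^ p ≤ (n.choose p : ℝ) * (c b : ℝ) ^ p := by
      exact_mod_cast h1
    have h2 : w b ≤ ((c b : ℝ) / n) ^ p := by
      rw [hwdef]
      simp only []
      rw [div_pow, div_le_div_iff₀ hMR (pow_pos hnR p), hMdef]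
      linarith [h1']
    have h3 : (w b) ^ ((p:ℝ)⁻¹) ≤ (((c b : ℝ)/(n:ℝ)) ^ p) ^ ((p:ℝ)⁻¹) :=
      Real.rpow_le_rpow (hw0 b) h2 (by positivity)
    rw [Real.pow_rpow_inv_natCast (by positivity) (by omega)] at h3
    calc (n:ℝ) * (w b) ^ ((p:ℝ)⁻¹) ≤ (n:ℝ) * ((c b : ℝ)/(n:ℝ)) :=
          mul_le_mul_of_nonneg_left h3 hnR.le
      _ = (c b : ℝ) := by field_simp
  -- Hölder over the classes
  set q : ℝ := 1 + (p:ℝ)⁻¹ with hq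
  have hq0 : (0:ℝ) < q := by positivity
  have hq1 : (1:ℝ) ≤ q := le_add_of_nonneg_right (by positivity)
  set S : ℝ := ∑ b ∈ I, (w b) ^ q with hS
  have hS0 : (0:ℝ) ≤ S := Finset.sum_nonneg (fun b _ => Real.rpow_nonneg (hw0 b) q)
  set kR : ℝ := (I.card : ℝ) with hkR
  have hk1 : (1:ℝ) ≤ kR := by
    have : I.Nonempty := by
      have hsne : s.Nonempty := by
        rw [← Finset.card_pos, hscard]; exact hM0
      exact hsne.image u
    have h5 := Finset.card_pos.mpr this
    rw [hkR]
    exact_mod_cast h5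
  have hk0 : (0:ℝ) < kR := lt_of_lt_of_le one_pos hk1
  have hk2 : kR ≤ (2:ℝ) ^ v := by
    have h5 : I.card ≤ 2 ^ v := by
      calc I.card ≤ Fintype.card (Finset (Fin v)) := Finset.card_le_univ I
        _ = 2 ^ v := by rw [Fintype.card_finset, Fintype.card_fin]
    rw [hkR]
    exact_mod_cast h5
  have holder := Real.inner_le_weight_mul_Lp_of_nonneg I hq1 (fun _ => (1:ℝ)) w
      (fun _ => zero_le_one) hw0
  simp only [one_mul] at holder
  rw [hwsum, Finset.sum_const, nsmul_eq_mul, mul_one, ← hS, ← hkR] at holder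
  have hrq : (1:ℝ) ≤ kR ^ ((p:ℝ)⁻¹) * S := by
    have h4 : (1:ℝ) ≤ (kR ^ (1 - q⁻¹) * S ^ q⁻¹) ^ q := by
      have h4' := Real.rpow_le_rpow zero_le_one holder hq0.le
      rwa [Real.one_rpow] at h4'
    rw [Real.mul_rpow (Real.rpow_nonneg hk0.le _) (Real.rpow_nonneg hS0 _),
      ← Real.rpow_mul hk0.le, ← Real.rpow_mul hS0] at h4
    have e1 : (1 - q⁻¹) * q = (p:ℝ)⁻¹ := by
      rw [sub_mul, inv_mul_cancel₀ hq0.ne', hq]; ring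
    have e2 : q⁻¹ * q = 1 := inv_mul_cancel₀ hq0.ne'
    rwa [e1, e2, Real.rpow_one] at h4
  set A : ℝ := (2:ℝ) ^ ((v:ℝ) / (p:ℝ)) with hA
  have hA0 : (0:ℝ) < A := Real.rpow_pos_of_pos two_pos _
  have hkA : kR ^ ((p:ℝ)⁻¹) ≤ A := by
    calc kR ^ ((p:ℝ)⁻¹) ≤ ((2:ℝ) ^ v) ^ ((p:ℝ)⁻¹) :=
          Real.rpow_le_rpow hk0.le hk2 (by positivity)
      _ = A := by
          rw [← Real.rpow_natCast 2 v, ← Real.rpow_mul (by norm_num), hA, div_eq_mul_inv]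
  have hSA : 1 / A ≤ S := by
    rw [div_le_iff₀ hA0]
    calc (1:ℝ) ≤ kR ^ ((p:ℝ)⁻¹) * S := hrq
      _ ≤ A * S := mul_le_mul_of_nonneg_right hkA hS0
      _ = S * A := mul_comm _ _
  -- main chain
  have hmain : M * ((n:ℝ) / A) ≤ ∑ P ∈ s, ((poolClosure g P).card : ℝ) := by
    rw [hsum]
    calc M * ((n:ℝ) / A) = (n:ℝ) * M * (1 / A) := by ring
      _ ≤ (n:ℝ) * M * S := by
          apply mul_le_mul_of_nonneg_left hSA (by positivity)
      _ = ∑ b ∈ I, (m b : ℝ) * ((n:ℝ) * (w b) ^ ((p:ℝ)⁻¹)) := by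
          rw [hS, Finset.mul_sum]
          refine Finset.sum_congr rfl (fun b hb => ?_)
          have hwb : (m b : ℝ) = M * w b := by
            rw [hwdef]; field_simp
          rw [hwb, hq, Real.rpow_add (hwpos b hb), Real.rpow_one]
          ring
      _ ≤ ∑ b ∈ I, (m b : ℝ) * (c b : ℝ) := by
          refine Finset.sum_le_sum (fun b hb => ?_)
          exact mul_le_mul_of_nonneg_left (hkey b hb) (Nat.cast_nonneg _)
  -- finish
  rw [ge_iff_le]
  have hfin : (n:ℝ) / A ≤ (1 / M) * ∑ P ∈ s, ((poolClosure g P).card : ℝ) := by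
    rw [one_div, inv_mul_eq_div, le_div_iff₀ hMR]
    calc (n:ℝ) / A * M = M * ((n:ℝ)/A) := by ring
      _ ≤ _ := hmain
  have hstep : (n:ℝ) / A * (1 - 4 / (p:ℝ)) - (p:ℝ) ≤ (n:ℝ) / A := by
    have h6 : (0:ℝ) ≤ (n:ℝ)/A := by positivity
    have h7 : (0:ℝ) ≤ 4 / (p:ℝ) := by positivity
    nlinarith [hpR]
  exact le_trans hstep hfin
end

section
/- Let n, S, i be natural numbers with 1 ≤ i ≤ n and S ≥ 1, and let s be the least natural number such that S · (s)_i > (n)_i. Then (s : ℝ) > n / S^{1/i}, where S^{1/i} denotes the real power. -/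
theorem least_descFactorial_gt_rpow_bound
    (n S i : ℕ) (hi1 : 1 ≤ i) (hin : i ≤ n) (hS : 1 ≤ S)
    (s : ℕ)
    (hs : IsLeast {t : ℕ | n.descFactorial i < S * t.descFactorial i} s) :
    (s : ℝ) > (n : ℝ) / (S : ℝ) ^ (1 / (i : ℝ)) := by
  set c : ℝ := (S : ℝ) ^ (1 / (i : ℝ)) with hc
  have hi0 : (i : ℝ) ≠ 0 := by positivity
  have hS1 : (1 : ℝ) ≤ (S : ℝ) := by exact_mod_cast hS
  have hc1 : (1 : ℝ) ≤ c := Real.one_le_rpow hS1 (by positivity)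
  have hc0 : 0 < c := lt_of_lt_of_le one_pos hc1
  have hci : c ^ i = (S : ℝ) := by
    rw [hc, ← Real.rpow_natCast ((S:ℝ) ^ (1 / (i:ℝ))) i, ← Real.rpow_mul (by positivity)]
    rw [one_div, inv_mul_cancel₀ hi0, Real.rpow_one]
  have hmem : n.descFactorial i < S * s.descFactorial i := hs.1
  have hndf : 0 < n.descFactorial i := Nat.pos_of_ne_zero fun h0 => by
    have := Nat.descFactorial_eq_zero_iff_lt.mp h0; omega
  have his : i ≤ s := by
    by_contra h
    push_neg at h
    rw [Nat.descFactorial_eq_zero_iff_lt.mpr h, Nat.mul_zero] at hmem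
    omega
  by_contra h
  push_neg at h
  have hsc : (s : ℝ) * c ≤ (n : ℝ) := by
    rw [le_div_iff₀ hc0] at h
    linarith
  -- for each j < i, c * (s - j) ≤ n - j
  have key : ∀ j ∈ Finset.range i, c * ((s : ℝ) - j) ≤ (n : ℝ) - j := by
    intro j hj
    have hj' : (j : ℝ) ≤ c * j := le_mul_of_one_le_left (by positivity) hc1
    nlinarith
  have hnonneg : ∀ j ∈ Finset.range i, 0 ≤ c * ((s : ℝ) - j) := by
    intro j hj
    rw [Finset.mem_range] at hj
    have hjs : (j : ℝ) < s := by exact_mod_cast lt_of_lt_of_le hj his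
    have : (0:ℝ) ≤ (s:ℝ) - j := by linarith
    positivity
  have hprod : ∏ j ∈ Finset.range i, (c * ((s : ℝ) - j)) ≤
      ∏ j ∈ Finset.range i, ((n : ℝ) - j) := by
    apply Finset.prod_le_prod hnonneg key
  have hcast : ∀ (m : ℕ), i ≤ m →
      ((m.descFactorial i : ℝ)) = ∏ j ∈ Finset.range i, ((m : ℝ) - j) := by
    intro m hm
    rw [Nat.descFactorial_eq_prod_range, Nat.cast_prod]
    apply Finset.prod_congr rfl
    intro j hj
    rw [Finset.mem_range] at hj
    rw [Nat.cast_sub (le_trans hj.le hm)]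
  have hL : ∏ j ∈ Finset.range i, (c * ((s : ℝ) - j)) =
      (S : ℝ) * (s.descFactorial i : ℝ) := by
    rw [Finset.prod_mul_distrib, Finset.prod_const, Finset.card_range, hci,
      hcast s his]
  have hR : ∏ j ∈ Finset.range i, ((n : ℝ) - j) = (n.descFactorial i : ℝ) :=
    (hcast n hin).symm
  rw [hL, hR] at hprod
  have : (S : ℝ) * (s.descFactorial i : ℝ) ≤ (n.descFactorial i : ℝ) := hprod
  have : S * s.descFactorial i ≤ n.descFactorial i := by exact_mod_cast this
  omega
end

section
/- Let n, v, k be natural numbers with 1 ≤ k ≤ n, let S = 2^v, and let s be the least natural number such that S · (s)_k > (n)_k. For any pooling design g : Fin n → Finset (Fin v), the expected number of unresolved negatives over a uniformly random k-element subset P of Fin n satisfies (1 / (n choose k)) · Σ_{P ⊆ Fin n, |P| = k} |closure(g,P) \ P| ≥ s · (1 − 4/k) − k. -/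
open Finset

private lemma hockey (k : ℕ) : ∀ m : ℕ, ∑ t ∈ range m, t.choose k = m.choose (k + 1) := by
  intro m
  induction m with
  | zero => simp
  | succ m ih =>
    rw [Finset.sum_range_succ, ih]
    simp only [Nat.choose_succ_succ, Nat.succ_eq_add_one]
    omega

theorem expected_unresolved_negatives_lower_bound
    (n v k : ℕ) (hk1 : 1 ≤ k) (hkn : k ≤ n)
    (s : ℕ)
    (hs : IsLeast {t : ℕ | n.descFactorial k < 2 ^ v * t.descFactorial k} s)
    (g : Fin n → Finset (Fin v)) :
    (1 / (n.choose k : ℝ)) *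
        ∑ P ∈ Finset.powersetCard k (Finset.univ : Finset (Fin n)),
          (((poolClosure g P) \ P).card : ℝ) ≥
      (s : ℝ) * (1 - 4 / (k : ℝ)) - (k : ℝ) := by
  classical
  set C := n.choose k with hCdef
  have hCpos : 0 < C := Nat.choose_pos hkn
  -- s ≥ 1
  have hs1 : 1 ≤ s := by
    rcases Nat.eq_zero_or_pos s with h0 | h; swap; · exact h
    exfalso
    have h1 := hs.1
    rw [h0] at h1
    simp only [Set.mem_setOf_eq, Nat.descFactorial_eq_zero_iff_lt.2 hk1, Nat.mul_zero] at h1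
    omega
  obtain ⟨s', rfl⟩ : ∃ s'', s = s'' + 1 := ⟨s - 1, by omega⟩
  have hmin : 2 ^ v * s'.descFactorial k ≤ n.descFactorial k := by
    by_contra h
    push_neg at h
    have := hs.2 h
    omega
  set pc := Finset.powersetCard k (Finset.univ : Finset (Fin n)) with hpc
  have hpcC : pc.card = C := by
    rw [hpc, card_powersetCard, card_univ, Fintype.card_fin]
  -- counting lemma
  have key : ∀ t : ℕ,
      (pc.filter (fun P => (poolClosure g P).card ≤ t)).card ≤ 2 ^ v * t.choose k := by
    intro t
    set B := pc.filter (fun P => (poolClosure g P).card ≤ t) with hB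
    have hmap : ∀ P ∈ B, P.biUnion g ∈ (univ : Finset (Finset (Fin v))) := by
      intros; exact mem_univ _
    rw [Finset.card_eq_sum_card_fiberwise hmap]
    have hbd : ∀ U ∈ (univ : Finset (Finset (Fin v))),
        (B.filter (fun P => P.biUnion g = U)).card ≤ t.choose k := by
      intro U _
      rcases (B.filter (fun P => P.biUnion g = U)).eq_empty_or_nonempty with he | ⟨P₀, hP₀⟩
      · simp [he]
      · simp only [hB, hpc, mem_filter, mem_powersetCard] at hP₀
        obtain ⟨⟨⟨_, hcard₀⟩, hclos₀⟩, hU₀⟩ := hP₀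
        have hFt : ((univ : Finset (Fin n)).filter (fun x => g x ⊆ U)).card ≤ t := by
          have hEq : poolClosure g P₀ = (univ : Finset (Fin n)).filter (fun x => g x ⊆ U) := by
            simp [poolClosure, hU₀]
          rwa [hEq] at hclos₀
        have hsub : B.filter (fun P => P.biUnion g = U) ⊆
            powersetCard k ((univ : Finset (Fin n)).filter (fun x => g x ⊆ U)) := by
          intro P hP
          simp only [hB, hpc, mem_filter, mem_powersetCard] at hP ⊢
          obtain ⟨⟨⟨_, hcard⟩, _⟩, hU⟩ := hP
          refine ⟨fun x hx => ?_, hcard⟩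
          simp only [mem_filter, mem_univ, true_and]
          exact hU ▸ subset_biUnion_of_mem g hx
        calc (B.filter (fun P => P.biUnion g = U)).card
            ≤ (powersetCard k ((univ : Finset (Fin n)).filter (fun x => g x ⊆ U))).card :=
              card_le_card hsub
          _ = (((univ : Finset (Fin n)).filter (fun x => g x ⊆ U)).card).choose k := by
              rw [card_powersetCard]
          _ ≤ t.choose k := Nat.choose_le_choose k hFt
    calc ∑ U ∈ (univ : Finset (Finset (Fin v))), (B.filter (fun P => P.biUnion g = U)).card
        ≤ ∑ _U ∈ (univ : Finset (Finset (Fin v))), t.choose k := sum_le_sum hbd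
      _ = 2 ^ v * t.choose k := by
          rw [Finset.sum_const, smul_eq_mul, card_univ, Fintype.card_finset, Fintype.card_fin]
  -- complement count
  have count : ∀ t : ℕ,
      C ≤ (pc.filter (fun P => t < (poolClosure g P).card)).card + 2 ^ v * t.choose k := by
    intro t
    have hsplit := Finset.card_filter_add_card_filter_not
      (s := pc) (p := fun P => t < (poolClosure g P).card)
    simp only [not_lt] at hsplit
    have := key t
    omega
  -- layer cake / swap
  have swap : ∑ t ∈ range (s' + 1),
      (pc.filter (fun P => t < (poolClosure g P).card)).card
      ≤ ∑ P ∈ pc, (poolClosure g P).card := by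
    calc ∑ t ∈ range (s' + 1), (pc.filter (fun P => t < (poolClosure g P).card)).card
        = ∑ t ∈ range (s' + 1), ∑ P ∈ pc, if t < (poolClosure g P).card then 1 else 0 :=
          Finset.sum_congr rfl fun t _ => by rw [Finset.card_filter]
      _ = ∑ P ∈ pc, ∑ t ∈ range (s' + 1), if t < (poolClosure g P).card then 1 else 0 :=
          Finset.sum_comm
      _ ≤ ∑ P ∈ pc, (poolClosure g P).card := by
          refine sum_le_sum fun P _ => ?_
          rw [← Finset.card_filter]
          calc ((range (s' + 1)).filter (fun t => t < (poolClosure g P).card)).card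
              ≤ (range ((poolClosure g P).card)).card :=
                card_le_card (fun t ht => by
                  simp only [mem_filter, mem_range] at ht ⊢; exact ht.2)
            _ = (poolClosure g P).card := card_range _
  -- main counting bound
  have main : (s' + 1) * C ≤ (∑ P ∈ pc, (poolClosure g P).card)
      + 2 ^ v * (s' + 1).choose (k + 1) := by
    calc (s' + 1) * C = ∑ _t ∈ range (s' + 1), C := by
          rw [Finset.sum_const, card_range, smul_eq_mul]
      _ ≤ ∑ t ∈ range (s' + 1),
            ((pc.filter (fun P => t < (poolClosure g P).card)).card + 2 ^ v * t.choose k) :=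
          sum_le_sum fun t _ => count t
      _ = (∑ t ∈ range (s' + 1), (pc.filter (fun P => t < (poolClosure g P).card)).card)
            + 2 ^ v * ∑ t ∈ range (s' + 1), t.choose k := by
          rw [Finset.sum_add_distrib, Finset.mul_sum]
      _ ≤ (∑ P ∈ pc, (poolClosure g P).card) + 2 ^ v * (s' + 1).choose (k + 1) := by
          rw [hockey]
          exact Nat.add_le_add_right swap _
  -- ratio bound
  have hratio : (k + 1) * (2 ^ v * (s' + 1).choose (k + 1)) ≤ (s' + 1) * C := by
    refine Nat.le_of_mul_le_mul_left ?_ (Nat.factorial_pos k)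
    have e1 : Nat.factorial k * ((k + 1) * (2 ^ v * (s' + 1).choose (k + 1)))
        = 2 ^ v * ((s' + 1).descFactorial (k + 1)) := by
      rw [Nat.descFactorial_eq_factorial_mul_choose, Nat.factorial_succ]
      ring
    have e2 : (s' + 1).descFactorial (k + 1) = (s' + 1) * s'.descFactorial k :=
      Nat.succ_descFactorial_succ s' k
    rw [e1, e2]
    calc 2 ^ v * ((s' + 1) * s'.descFactorial k)
        = (s' + 1) * (2 ^ v * s'.descFactorial k) := by ring
      _ ≤ (s' + 1) * n.descFactorial k := Nat.mul_le_mul_left _ hmin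
      _ = Nat.factorial k * ((s' + 1) * C) := by
          rw [Nat.descFactorial_eq_factorial_mul_choose]; ring
  -- move to the reals
  set T : ℝ := ∑ P ∈ pc, ((poolClosure g P).card : ℝ) with hT
  set D : ℝ := ((2 ^ v * (s' + 1).choose (k + 1) : ℕ) : ℝ) with hD
  have hA : ((s' : ℝ) + 1) * C ≤ T + D := by
    have := (Nat.cast_le (α := ℝ)).2 main
    push_cast at this
    rw [hT, hD]
    push_cast
    convert this using 2
  have hBr : ((k : ℝ) + 1) * D ≤ ((s' : ℝ) + 1) * C := by
    have := (Nat.cast_le (α := ℝ)).2 hratio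
    push_cast at this
    rw [hD]
    push_cast
    convert this using 2
  have hDnn : 0 ≤ D := by rw [hD]; positivity
  have hCr : (0 : ℝ) < C := by exact_mod_cast hCpos
  have hkr : (1 : ℝ) ≤ k := by exact_mod_cast hk1
  -- each term of the sum
  have hterm : ∀ P ∈ pc, (((poolClosure g P) \ P).card : ℝ)
      = ((poolClosure g P).card : ℝ) - k := by
    intro P hP
    rw [hpc, mem_powersetCard] at hP
    have hsub : P ⊆ poolClosure g P := by
      intro x hx
      simp only [poolClosure, mem_filter, mem_univ, true_and]
      exact subset_biUnion_of_mem g hx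
    rw [card_sdiff_of_subset hsub, Nat.cast_sub (card_le_card hsub), hP.2]
  rw [Finset.sum_congr rfl hterm, Finset.sum_sub_distrib, Finset.sum_const, hpcC]
  -- final arithmetic
  have hstep : ((s' : ℝ) + 1) * (1 - 4 / k) * C ≤ T := by
    have h1 : ((s' : ℝ) + 1) * (1 - 4 / k) * C ≤ ((s' : ℝ) + 1) * (1 - 1 / (k + 1)) * C := by
      have h4k : (1 : ℝ) / (k + 1) ≤ 4 / k := by
        rw [div_le_div_iff₀ (by linarith) (by linarith)]
        nlinarith
      have hsC : (0 : ℝ) ≤ (s' + 1 : ℝ) * C := by positivity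
      nlinarith [hsC]
    have h2 : ((s' : ℝ) + 1) * (1 - 1 / (k + 1)) * C ≤ ((s' : ℝ) + 1) * C - D := by
      have hD2 : D ≤ ((s' : ℝ) + 1) * C / (k + 1) := by
        rw [le_div_iff₀ (by linarith)]
        nlinarith [hBr]
      have : ((s' : ℝ) + 1) * (1 - 1 / (k + 1)) * C
          = ((s' : ℝ) + 1) * C - ((s' : ℝ) + 1) * C / (k + 1) := by
        field_simp
      rw [this]
      linarith
    linarith
  rw [ge_iff_le]
  have hgoal : ((s' : ℝ) + 1) * (1 - 4 / k) - k ≤ (1 / (C : ℝ)) * (T - C • (k : ℝ)) := by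
    rw [nsmul_eq_mul, one_div, inv_mul_eq_div, le_div_iff₀ hCr]
    nlinarith [hstep]
  calc ((s' + 1 : ℕ) : ℝ) * (1 - 4 / k) - k = ((s' : ℝ) + 1) * (1 - 4 / k) - k := by push_cast; ring
    _ ≤ _ := hgoal
end

section
/- Let n ≥ 1 and S ≥ 1 be natural numbers and let p(0), …, p(n) be nonnegative reals. For 0 ≤ i ≤ n let s(i) be the least natural number s with S · (s)_i > (n)_i. Then there exist nonnegative reals v, v_0, …, v_n and v_{i,j} for 0 ≤ i ≤ j ≤ n such that: (a) for every j with 0 ≤ j ≤ n, Σ_{i ≤ j} v_{i,j} ≤ (n choose j) · v; (b) for every pair i ≤ j, (n−i choose j−i) · v_i − v_{i,j} ≤ p(i) · (n−i choose j−i) · (j − i); and (c) Σ_{i=0}^n v_i − S·v ≥ Σ_{i=0}^n p(i)·(s(i) − i) − S · max_{0 ≤ j ≤ n} Σ_{i : i ≤ j < s(i)} ((j)_i / (n)_i) · p(i) · (s(i) − j). -/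
lemma choose_descFactorial_key {n i j : ℕ} (hij : i ≤ j) (hjn : j ≤ n) :
    n.choose j * j.descFactorial i = (n - i).choose (j - i) * n.descFactorial i := by
  rw [Nat.descFactorial_eq_factorial_mul_choose, Nat.descFactorial_eq_factorial_mul_choose,
    Nat.mul_comm (Nat.factorial i) (j.choose i), ← Nat.mul_assoc, Nat.choose_mul hij]
  ring

theorem dual_feasible_solution_exists
    (n S : ℕ) (hn : 1 ≤ n) (hS : 1 ≤ S)
    (p : ℕ → ℝ) (hp : ∀ i ≤ n, 0 ≤ p i)
    (s : ℕ → ℕ)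
    (hs : ∀ i ≤ n, IsLeast {t : ℕ | n.descFactorial i < S * t.descFactorial i} (s i)) :
    ∃ (v : ℝ) (vi : ℕ → ℝ) (vij : ℕ → ℕ → ℝ),
      0 ≤ v ∧ (∀ i ≤ n, 0 ≤ vi i) ∧
      (∀ i j, i ≤ j → j ≤ n → 0 ≤ vij i j) ∧
      -- (a)
      (∀ j ≤ n, ∑ i ∈ Finset.range (j + 1), vij i j ≤ (n.choose j : ℝ) * v) ∧
      -- (b)
      (∀ i j, i ≤ j → j ≤ n →
        ((n - i).choose (j - i) : ℝ) * vi i - vij i j ≤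
          p i * ((n - i).choose (j - i) : ℝ) * ((j : ℝ) - (i : ℝ))) ∧
      -- (c)
      (∑ i ∈ Finset.range (n + 1), vi i - (S : ℝ) * v ≥
        ∑ i ∈ Finset.range (n + 1), p i * ((s i : ℝ) - (i : ℝ)) -
          (S : ℝ) *
            (Finset.range (n + 1)).sup' ⟨0, by simp⟩
              (fun j => ∑ i ∈ Finset.range (j + 1),
                if j < s i then
                  ((j.descFactorial i : ℝ) / (n.descFactorial i : ℝ)) * p i *
                    ((s i : ℝ) - (j : ℝ))
                else 0)) := by
  -- s i ≥ i for i ≤ n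
  have hsi : ∀ i ≤ n, i ≤ s i := by
    intro i hi
    by_contra h
    push_neg at h
    have h1 := (hs i hi).1
    simp only [Set.mem_setOf_eq] at h1
    rw [Nat.descFactorial_eq_zero_iff_lt.mpr h] at h1
    simp at h1
  set f : ℕ → ℝ := fun j => ∑ i ∈ Finset.range (j + 1),
      if j < s i then
        ((j.descFactorial i : ℝ) / (n.descFactorial i : ℝ)) * p i *
          ((s i : ℝ) - (j : ℝ))
      else 0 with hf
  set M : ℝ := (Finset.range (n + 1)).sup' Finset.nonempty_range_add_one f with hM
  have hfnn : ∀ j ≤ n, 0 ≤ f j := by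
    intro j hj
    apply Finset.sum_nonneg
    intro i hi
    simp only [Finset.mem_range] at hi
    split
    · next hji =>
      apply mul_nonneg
      apply mul_nonneg
      · positivity
      · exact hp i (by omega)
      · have : (j : ℝ) < (s i : ℝ) := by exact_mod_cast hji
        linarith
    · exact le_refl 0
  have hM0 : 0 ≤ M := le_trans (hfnn 0 (by omega))
      (Finset.le_sup' f (by simp : 0 ∈ Finset.range (n + 1)))
  refine ⟨M, fun i => p i * ((s i : ℝ) - (i : ℝ)),
    fun i j => ((n - i).choose (j - i) : ℝ) * p i * max 0 ((s i : ℝ) - (j : ℝ)),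
    hM0, ?_, ?_, ?_, ?_, ?_⟩
  · intro i hi
    apply mul_nonneg (hp i hi)
    have := hsi i hi
    have : (i : ℝ) ≤ (s i : ℝ) := by exact_mod_cast this
    linarith
  · intro i j hij hjn
    apply mul_nonneg (mul_nonneg (by positivity) (hp i (by omega))) (le_max_left _ _)
  · -- (a)
    intro j hj
    have key : ∀ i ∈ Finset.range (j + 1),
        ((n - i).choose (j - i) : ℝ) * p i * max 0 ((s i : ℝ) - (j : ℝ)) =
        (n.choose j : ℝ) * (if j < s i then
          ((j.descFactorial i : ℝ) / (n.descFactorial i : ℝ)) * p i *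
            ((s i : ℝ) - (j : ℝ)) else 0) := by
      intro i hi
      simp only [Finset.mem_range] at hi
      have hij : i ≤ j := by omega
      have hin : i ≤ n := by omega
      have hd : (0 : ℝ) < (n.descFactorial i : ℝ) := by
        have : 0 < n.descFactorial i := Nat.pos_of_ne_zero fun h => by
          have := Nat.descFactorial_eq_zero_iff_lt.mp h; omega
        exact_mod_cast this
      by_cases hjs : j < s i
      · rw [if_pos hjs]
        have hmax : max 0 ((s i : ℝ) - (j : ℝ)) = (s i : ℝ) - (j : ℝ) := by
          rw [max_eq_right]
          have : (j : ℝ) < (s i : ℝ) := by exact_mod_cast hjs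
          linarith
        rw [hmax]
        have hk := choose_descFactorial_key hij hj
        have hkR : (n.choose j : ℝ) * (j.descFactorial i : ℝ) =
            ((n - i).choose (j - i) : ℝ) * (n.descFactorial i : ℝ) := by
          exact_mod_cast hk
        have hC' : ((n - i).choose (j - i) : ℝ) =
            (n.choose j : ℝ) * ((j.descFactorial i : ℝ) / (n.descFactorial i : ℝ)) := by
          field_simp
          linarith [hkR]
        rw [hC']; ring
      · rw [if_neg hjs]
        have hmax : max 0 ((s i : ℝ) - (j : ℝ)) = 0 := by
          rw [max_eq_left]
          have : (s i : ℝ) ≤ (j : ℝ) := by exact_mod_cast Nat.not_lt.mp hjs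
          linarith
        rw [hmax]; ring
    rw [Finset.sum_congr rfl key, ← Finset.mul_sum]
    apply mul_le_mul_of_nonneg_left _ (by positivity)
    exact Finset.le_sup' f (by simp [Nat.lt_succ_iff, hj] : j ∈ Finset.range (n + 1))
  · -- (b)
    intro i j hij hjn
    have hpnn := hp i (le_trans hij hjn)
    have hC : (0 : ℝ) ≤ ((n - i).choose (j - i) : ℝ) := by positivity
    have hineq : ((s i : ℝ) - (i : ℝ)) - max 0 ((s i : ℝ) - (j : ℝ)) ≤ (j : ℝ) - (i : ℝ) := by
      rcases le_total ((s i : ℝ) - (j : ℝ)) 0 with h | h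
      · rw [max_eq_left h]; linarith
      · rw [max_eq_right h]; linarith
    dsimp only
    nlinarith [mul_le_mul_of_nonneg_left hineq (mul_nonneg hC hpnn)]
  · -- (c)
    apply ge_of_eq
    ring
end

section
/- Let k and s be natural numbers with 2 ≤ k and k ≤ s. Then for every natural number j with k ≤ j < s, the inequality (j)_k · (s − j) ≤ 4 · (s / k) · (s−1)_k holds in the reals. -/
lemma sum_descFactorial_range (k : ℕ) : ∀ s : ℕ,
    (k + 1) * ∑ i ∈ Finset.range s, i.descFactorial k = s.descFactorial (k + 1) := by
  intro s
  induction s with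
  | zero => simp
  | succ s ih =>
    rw [Finset.sum_range_succ, Nat.mul_add, ih, Nat.succ_descFactorial_succ,
      Nat.descFactorial_succ]
    rcases le_or_gt k s with h | h
    · have : s - k + (k + 1) = s + 1 := by omega
      calc (s - k) * s.descFactorial k + (k + 1) * s.descFactorial k
          = (s - k + (k + 1)) * s.descFactorial k := by ring
        _ = (s + 1) * s.descFactorial k := by rw [this]
    · rw [Nat.descFactorial_eq_zero_iff_lt.2 h]
      ring

lemma key_nat (k s j : ℕ) (hjk : k ≤ j) (hjs : j < s) :
    (k + 1) * (j.descFactorial k * (s - j)) ≤ s.descFactorial (k + 1) := by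
  rw [← sum_descFactorial_range]
  apply Nat.mul_le_mul_left
  calc j.descFactorial k * (s - j)
      = ∑ _i ∈ Finset.Ico j s, j.descFactorial k := by
        rw [Finset.sum_const, Nat.card_Ico, smul_eq_mul, Nat.mul_comm]
    _ ≤ ∑ i ∈ Finset.Ico j s, i.descFactorial k := by
        apply Finset.sum_le_sum
        intro i hi
        exact Nat.descFactorial_le k (Finset.mem_Ico.1 hi).1
    _ ≤ ∑ i ∈ Finset.range s, i.descFactorial k := by
        apply Finset.sum_le_sum_of_subset
        intro i hi
        simp only [Finset.mem_Ico, Finset.mem_range] at *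
        omega

theorem descFactorial_mul_le_bound
    (k s : ℕ) (hk : 2 ≤ k) (hks : k ≤ s) :
    ∀ j : ℕ, k ≤ j → j < s →
      (j.descFactorial k : ℝ) * ((s : ℝ) - (j : ℝ)) ≤
        4 * ((s : ℝ) / (k : ℝ)) * ((s - 1).descFactorial k : ℝ) := by
  intro j hjk hjs
  have hk0 : (0 : ℝ) < (k : ℝ) := by positivity
  have hs1 : s - 1 + 1 = s := by omega
  have hnat : k * (j.descFactorial k * (s - j)) ≤ 4 * (s * (s - 1).descFactorial k) := by
    calc k * (j.descFactorial k * (s - j))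
        ≤ (k + 1) * (j.descFactorial k * (s - j)) := by
          apply Nat.mul_le_mul_right; omega
      _ ≤ s.descFactorial (k + 1) := key_nat k s j hjk hjs
      _ = s * (s - 1).descFactorial k := by
          conv_lhs => rw [← hs1, Nat.succ_descFactorial_succ, hs1]
      _ ≤ 4 * (s * (s - 1).descFactorial k) := by omega
  have hcast : ((s - j : ℕ) : ℝ) = (s : ℝ) - (j : ℝ) := by
    rw [Nat.cast_sub hjs.le]
  have hR : (k : ℝ) * ((j.descFactorial k : ℝ) * ((s : ℝ) - (j : ℝ)))
      ≤ 4 * ((s : ℝ) * ((s - 1).descFactorial k : ℝ)) := by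
    rw [← hcast]
    exact_mod_cast hnat
  rw [show (4 : ℝ) * ((s : ℝ) / (k : ℝ)) * ((s - 1).descFactorial k : ℝ)
      = 4 * ((s : ℝ) * ((s - 1).descFactorial k : ℝ)) / (k : ℝ) by ring,
    le_div_iff₀ hk0]
  linarith
end

section
/- Let α > β > 0 be reals and let ε₀ satisfy 0 < ε₀ < 1 − β/α. Let f : ℕ → ℝ be a function with f(n) → ∞ and f(n)/n^{ε₀} → 0 as n → ∞, and let k_n be natural numbers with k_n / f(n) → α. For each n, let v_n be a natural number with v_n ≤ β · log₂(n) · f(n), and let g_n : Fin n → Finset (Fin v_n) be an arbitrary pooling design. Then for every δ > 0 there exists N such that for all n ≥ N, the expected number of unresolved negatives over a uniformly random k_n-element subset satisfies (1 / (n choose k_n)) · Σ_{P ⊆ Fin n, |P| = k_n} |closure(g_n,P) \ P| ≥ n^{1 − β/α − δ}. -/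
open Filter

lemma subset_poolClosure {n v : ℕ} (g : Fin n → Finset (Fin v)) (P : Finset (Fin n)) :
    P ⊆ poolClosure g P := by
  intro x hx
  simp only [poolClosure, Finset.mem_filter, Finset.mem_univ, true_and]
  exact Finset.subset_biUnion_of_mem g hx

lemma bad_card_le {n vv kk D : ℕ} (g : Fin n → Finset (Fin vv)) :
    ((Finset.powersetCard kk (Finset.univ : Finset (Fin n))).filter
       (fun P => (poolClosure g P).card < kk + D)).card ≤ 2 ^ vv * (kk + D).choose kk := by
  classical
  set bad := (Finset.powersetCard kk (Finset.univ : Finset (Fin n))).filter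
       (fun P => (poolClosure g P).card < kk + D) with hbaddef
  have hcard : bad.card = ∑ o ∈ (Finset.univ : Finset (Finset (Fin vv))),
      (bad.filter (fun P => P.biUnion g = o)).card :=
    Finset.card_eq_sum_card_fiberwise (fun P _ => Finset.mem_univ _)
  rw [hcard]
  have hfib : ∀ o ∈ (Finset.univ : Finset (Finset (Fin vv))),
      (bad.filter (fun P => P.biUnion g = o)).card ≤ (kk + D).choose kk := by
    intro o _
    rcases (bad.filter (fun P => P.biUnion g = o)).eq_empty_or_nonempty with h | ⟨P₀, hP₀⟩
    · simp [h]
    · rw [Finset.mem_filter] at hP₀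
      obtain ⟨hP₀bad, hP₀o⟩ := hP₀
      rw [hbaddef, Finset.mem_filter] at hP₀bad
      obtain ⟨hP₀mem, hP₀lt⟩ := hP₀bad
      set Co := Finset.univ.filter (fun x : Fin n => g x ⊆ o) with hCodef
      have hCo : Co = poolClosure g P₀ := by
        rw [hCodef, poolClosure, hP₀o]
      have hCoCard : Co.card < kk + D := by rw [hCo]; exact hP₀lt
      have hsub : (bad.filter (fun P => P.biUnion g = o)) ⊆ Finset.powersetCard kk Co := by
        intro P hP
        rw [Finset.mem_filter] at hP
        obtain ⟨hPbad, hPo⟩ := hP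
        rw [hbaddef, Finset.mem_filter] at hPbad
        obtain ⟨hPmem, _⟩ := hPbad
        rw [Finset.mem_powersetCard_univ] at hPmem
        rw [Finset.mem_powersetCard]
        refine ⟨?_, hPmem⟩
        intro x hx
        rw [hCodef, Finset.mem_filter]
        refine ⟨Finset.mem_univ _, ?_⟩
        calc g x ⊆ P.biUnion g := Finset.subset_biUnion_of_mem g hx
          _ = o := hPo
      calc (bad.filter (fun P => P.biUnion g = o)).card
          ≤ (Finset.powersetCard kk Co).card := Finset.card_le_card hsub
        _ = Co.card.choose kk := by rw [Finset.card_powersetCard]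
        _ ≤ (kk + D).choose kk := Nat.choose_le_choose kk hCoCard.le
  calc ∑ o ∈ (Finset.univ : Finset (Finset (Fin vv))),
        (bad.filter (fun P => P.biUnion g = o)).card
      ≤ ∑ _o ∈ (Finset.univ : Finset (Finset (Fin vv))), (kk + D).choose kk :=
        Finset.sum_le_sum hfib
    _ = 2 ^ vv * (kk + D).choose kk := by
        rw [Finset.sum_const, Finset.card_univ, Fintype.card_finset, Fintype.card_fin,
          smul_eq_mul]

lemma sum_lower {n vv kk D : ℕ} (g : Fin n → Finset (Fin vv)) :
    ((Finset.powersetCard kk (Finset.univ : Finset (Fin n))).card -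
        ((Finset.powersetCard kk (Finset.univ : Finset (Fin n))).filter
          (fun P => (poolClosure g P).card < kk + D)).card) * D ≤
      ∑ P ∈ Finset.powersetCard kk (Finset.univ : Finset (Fin n)),
        ((poolClosure g P) \ P).card := by
  classical
  set S := Finset.powersetCard kk (Finset.univ : Finset (Fin n)) with hSdef
  set bad := S.filter (fun P => (poolClosure g P).card < kk + D) with hbaddef
  have hsub : bad ⊆ S := Finset.filter_subset _ _
  have h1 : (S.card - bad.card) * D = ∑ _P ∈ S \ bad, D := by
    rw [Finset.sum_const, Finset.card_sdiff_of_subset hsub, smul_eq_mul]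
  rw [h1]
  calc ∑ _P ∈ S \ bad, D ≤ ∑ P ∈ S \ bad, ((poolClosure g P) \ P).card := by
        apply Finset.sum_le_sum
        intro P hP
        rw [Finset.mem_sdiff] at hP
        obtain ⟨hPS, hPnbad⟩ := hP
        have hnotlt : ¬ (poolClosure g P).card < kk + D := by
          intro h
          exact hPnbad (Finset.mem_filter.mpr ⟨hPS, h⟩)
        push_neg at hnotlt
        have hPcard : P.card = kk := by
          rw [hSdef, Finset.mem_powersetCard_univ] at hPS
          exact hPS
        rw [Finset.card_sdiff_of_subset (subset_poolClosure g P), hPcard]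
        omega
    _ ≤ ∑ P ∈ S, ((poolClosure g P) \ P).card :=
        Finset.sum_le_sum_of_subset (Finset.sdiff_subset)

set_option maxHeartbeats 2000000 in
theorem conditioned_lower_bound
    (α β ε₀ : ℝ) (hβ : 0 < β) (hαβ : β < α) (hε₀ : 0 < ε₀) (hε₀' : ε₀ < 1 - β / α)
    (f : ℕ → ℝ)
    (hf : Tendsto f atTop atTop)
    (hf' : Tendsto (fun n : ℕ => f n / (n : ℝ) ^ ε₀) atTop (nhds 0))
    (k : ℕ → ℕ)
    (hk : Tendsto (fun n : ℕ => (k n : ℝ) / f n) atTop (nhds α))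
    (v : ℕ → ℕ)
    (hv : ∀ n : ℕ, (v n : ℝ) ≤ β * Real.logb 2 n * f n)
    (g : ∀ n : ℕ, Fin n → Finset (Fin (v n))) :
    ∀ δ > 0, ∃ N : ℕ, ∀ n ≥ N,
      (1 / (n.choose (k n) : ℝ)) *
          ∑ P ∈ Finset.powersetCard (k n) (Finset.univ : Finset (Fin n)),
            (((poolClosure (g n) P) \ P).card : ℝ) ≥
        (n : ℝ) ^ (1 - β / α - δ) := by
  classical
  intro δ hδ
  have hα : 0 < α := hβ.trans hαβ
  have hβα : 0 < β / α := div_pos hβ hα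
  have hgap : 0 < 1 - β / α - ε₀ := by linarith
  set δ' := min δ ((1 - β / α - ε₀) / 2) with hδ'def
  have hδ'pos : 0 < δ' := lt_min hδ (by linarith)
  have hδ'le : δ' ≤ δ := min_le_left _ _
  have hδ'half : δ' ≤ (1 - β / α - ε₀) / 2 := min_le_right _ _
  set γ := 1 - β / α - δ' with hγdef
  have hγε : ε₀ + δ' ≤ γ := by rw [hγdef]; linarith
  have hγpos : 0 < γ := by linarith
  have hγlt1 : 0 < 1 - γ := by rw [hγdef]; linarith
  have h1γ : 1 - γ = β / α + δ' := by rw [hγdef]; ring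
  set η := α * δ' / (2 * (β / α + δ')) with hηdef
  have hden : 0 < β / α + δ' := by linarith
  have hηpos : 0 < η := div_pos (mul_pos hα hδ'pos) (by linarith)
  set c := α * δ' / 2 with hcdef
  have hc : 0 < c := by positivity
  have hηc : η * (β / α + δ') = c := by
    rw [hηdef, hcdef]
    field_simp
  set M := 2 * (12 : ℝ) ^ (α + η) with hMdef
  have hMpos : 0 < M := by positivity
  set D : ℕ → ℕ := fun n => ⌈(2 : ℝ) * (n : ℝ) ^ γ⌉₊ with hDdef
  -- eventual facts
  have hev1 : ∀ᶠ n in atTop, 1 ≤ f n := hf.eventually_ge_atTop 1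
  have hev2 : ∀ᶠ n in atTop, (k n : ℝ) / f n ∈ Set.Ioo (α - η) (α + η) :=
    hk (Ioo_mem_nhds (by linarith) (by linarith))
  have hkε : Tendsto (fun n : ℕ => (k n : ℝ) / (n : ℝ) ^ ε₀) atTop (nhds 0) := by
    have hmul : Tendsto (fun n : ℕ => ((k n : ℝ) / f n) * (f n / (n : ℝ) ^ ε₀))
        atTop (nhds (α * 0)) := hk.mul hf'
    rw [mul_zero] at hmul
    refine hmul.congr' ?_
    filter_upwards [hev1] with n h1
    have hfne : f n ≠ 0 := by linarith
    rcases eq_or_ne ((n : ℝ) ^ ε₀) 0 with h | h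
    · simp [h]
    · field_simp
  have hev3 : ∀ᶠ n in atTop, (k n : ℝ) / (n : ℝ) ^ ε₀ < 1 :=
    hkε.eventually (eventually_lt_nhds one_pos |>.mono fun x hx => hx)
  have hev4 : ∀ᶠ n : ℕ in atTop, (2 : ℝ) ≤ (n : ℝ) ^ (1 - ε₀) :=
    ((tendsto_rpow_atTop (by linarith : (0:ℝ) < 1 - ε₀)).comp
      tendsto_natCast_atTop_atTop).eventually_ge_atTop 2
  have hev5 : ∀ᶠ n : ℕ in atTop, M ≤ (n : ℝ) ^ c :=
    ((tendsto_rpow_atTop hc).comp tendsto_natCast_atTop_atTop).eventually_ge_atTop M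
  have hev6 : ∀ᶠ n in atTop, 1 ≤ n := eventually_ge_atTop 1
  have H : ∀ᶠ n in atTop,
      (1 / (n.choose (k n) : ℝ)) *
          ∑ P ∈ Finset.powersetCard (k n) (Finset.univ : Finset (Fin n)),
            (((poolClosure (g n) P) \ P).card : ℝ) ≥
        (n : ℝ) ^ (1 - β / α - δ) := by
    filter_upwards [hev1, hev2, hev3, hev4, hev5, hev6] with n h1 h2 h3 h4 h5 h6
    have hn1 : (1 : ℝ) ≤ (n : ℝ) := by exact_mod_cast h6
    have hn0 : (0 : ℝ) < (n : ℝ) := by linarith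
    have hfpos : 0 < f n := by linarith
    have hklow : (α - η) * f n ≤ (k n : ℝ) := by
      have := h2.1
      rw [lt_div_iff₀ hfpos] at this
      linarith
    have hkup : (k n : ℝ) ≤ (α + η) * f n := by
      have := h2.2
      rw [div_lt_iff₀ hfpos] at this
      linarith
    have hnε₀pos : (0 : ℝ) < (n : ℝ) ^ ε₀ := Real.rpow_pos_of_pos hn0 _
    have hkε' : (k n : ℝ) ≤ (n : ℝ) ^ ε₀ := by
      rw [div_lt_iff₀ hnε₀pos] at h3
      linarith
    have hnγpos : (0 : ℝ) < (n : ℝ) ^ γ := Real.rpow_pos_of_pos hn0 _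
    have hnγ1 : (1 : ℝ) ≤ (n : ℝ) ^ γ := by
      have := Real.rpow_le_rpow_of_exponent_le hn1 hγpos.le
      rwa [Real.rpow_zero] at this
    have hkγ : (k n : ℝ) ≤ (n : ℝ) ^ γ :=
      hkε'.trans (Real.rpow_le_rpow_of_exponent_le hn1 (by linarith))
    have hD2 : 2 * (n : ℝ) ^ γ ≤ (D n : ℝ) := Nat.le_ceil _
    have hD3 : (D n : ℝ) ≤ 3 * (n : ℝ) ^ γ := by
      have := Nat.ceil_lt_add_one (by positivity : (0:ℝ) ≤ 2 * (n : ℝ) ^ γ)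
      simp only [hDdef] at *
      linarith
    have hkD : ((k n + D n : ℕ) : ℝ) ≤ 6 * (n : ℝ) ^ γ := by
      push_cast
      linarith
    have h2k : (2 : ℝ) * (k n : ℝ) ≤ (n : ℝ) := by
      have : (2 : ℝ) * (n : ℝ) ^ ε₀ ≤ (n : ℝ) ^ (1 - ε₀) * (n : ℝ) ^ ε₀ :=
        mul_le_mul_of_nonneg_right h4 hnε₀pos.le
      rw [← Real.rpow_add hn0] at this
      have h1' : (1 - ε₀) + ε₀ = 1 := by ring
      rw [h1', Real.rpow_one] at this
      linarith
    have hknat : k n ≤ n := by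
      have : (k n : ℝ) ≤ (n : ℝ) := by linarith
      exact_mod_cast this
    -- the key real inequality
    have hvle : (2 : ℝ) ^ (v n) ≤ (n : ℝ) ^ (β * f n) := by
      have step1 : (2 : ℝ) ^ (v n) = (2 : ℝ) ^ ((v n : ℝ)) := by
        rw [Real.rpow_natCast]
      have step2 : (2 : ℝ) ^ ((v n : ℝ)) ≤ (2 : ℝ) ^ (β * Real.logb 2 n * f n) :=
        Real.rpow_le_rpow_of_exponent_le one_le_two (hv n)
      have step3 : (2 : ℝ) ^ (β * Real.logb 2 n * f n) = (n : ℝ) ^ (β * f n) := by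
        rw [show β * Real.logb 2 (n : ℝ) * f n = Real.logb 2 (n : ℝ) * (β * f n) by ring,
          Real.rpow_mul (by norm_num : (0:ℝ) ≤ 2),
          Real.rpow_logb (by norm_num) (by norm_num) hn0]
      rw [step1]
      exact step2.trans_eq step3
    set e := (k n : ℝ) * (1 - γ) - β * f n with hedef
    have hce : c * f n ≤ e := by
      rw [hedef, h1γ]
      have hh : (α - η) * f n * (β / α + δ') ≤ (k n : ℝ) * (β / α + δ') :=
        mul_le_mul_of_nonneg_right hklow hden.le
      have hab : α * (β / α + δ') = β + α * δ' := by
        rw [mul_add, mul_comm α (β / α), div_mul_cancel₀ β hα.ne']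
      have hkey : (α - η) * (β / α + δ') = β + c := by
        rw [sub_mul, hab, hηc, hcdef]; ring
      have h2 : (α - η) * f n * (β / α + δ') = (β + c) * f n := by
        rw [← hkey]; ring
      rw [h2] at hh
      linarith
    have h12k : 2 * (12 : ℝ) ^ (k n) ≤ (n : ℝ) ^ e := by
      have ha : (12 : ℝ) ^ (k n) ≤ (12 : ℝ) ^ ((α + η) * f n) := by
        rw [← Real.rpow_natCast 12 (k n)]
        exact Real.rpow_le_rpow_of_exponent_le (by norm_num) hkup
      have hb : M ^ (f n) ≤ ((n : ℝ) ^ c) ^ (f n) :=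
        Real.rpow_le_rpow hMpos.le h5 (by linarith)
      have hb' : ((n : ℝ) ^ c) ^ (f n) = (n : ℝ) ^ (c * f n) := by
        rw [← Real.rpow_mul hn0.le]
      have hMf : M ^ (f n) = (2 : ℝ) ^ (f n) * (12 : ℝ) ^ ((α + η) * f n) := by
        rw [hMdef, Real.mul_rpow (by norm_num) (by positivity),
          ← Real.rpow_mul (by norm_num : (0:ℝ) ≤ 12)]
      have h2f : (2 : ℝ) ≤ (2 : ℝ) ^ (f n) := by
        have := Real.rpow_le_rpow_of_exponent_le (one_le_two) h1
        rwa [Real.rpow_one] at this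
      have h12pos : (0 : ℝ) < (12 : ℝ) ^ ((α + η) * f n) := by positivity
      have hne : (n : ℝ) ^ (c * f n) ≤ (n : ℝ) ^ e :=
        Real.rpow_le_rpow_of_exponent_le hn1 hce
      calc 2 * (12 : ℝ) ^ (k n) ≤ 2 * (12 : ℝ) ^ ((α + η) * f n) := by
            apply mul_le_mul_of_nonneg_left ha (by norm_num)
        _ ≤ (2 : ℝ) ^ (f n) * (12 : ℝ) ^ ((α + η) * f n) :=
            mul_le_mul_of_nonneg_right h2f h12pos.le
        _ = M ^ (f n) := hMf.symm
        _ ≤ ((n : ℝ) ^ c) ^ (f n) := hb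
        _ = (n : ℝ) ^ (c * f n) := hb'
        _ ≤ (n : ℝ) ^ e := hne
    have hmain : (2 : ℝ) * 2 ^ (v n) * ((k n + D n : ℕ) : ℝ) ^ (k n) ≤
        ((n - k n + 1 : ℕ) : ℝ) ^ (k n) := by
      have hkD' : ((k n + D n : ℕ) : ℝ) ^ (k n) ≤ (6 * (n : ℝ) ^ γ) ^ (k n) :=
        pow_le_pow_left₀ (by positivity) hkD _
      have hnk2 : (n : ℝ) / 2 ≤ ((n - k n + 1 : ℕ) : ℝ) := by
        rw [Nat.cast_add, Nat.cast_sub hknat]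
        push_cast
        linarith
      have hhalf : ((n : ℝ) / 2) ^ (k n) ≤ ((n - k n + 1 : ℕ) : ℝ) ^ (k n) :=
        pow_le_pow_left₀ (by positivity) hnk2 _
      have hmid : 2 * (n : ℝ) ^ (β * f n) * (6 * (n : ℝ) ^ γ) ^ (k n) ≤
          ((n : ℝ) / 2) ^ (k n) := by
        have expand : (6 * (n : ℝ) ^ γ) ^ (k n) = 6 ^ (k n) * (n : ℝ) ^ (γ * (k n : ℝ)) := by
          rw [mul_pow, ← Real.rpow_natCast ((n:ℝ) ^ γ) (k n), ← Real.rpow_mul hn0.le]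
        have expand2 : ((n : ℝ) / 2) ^ (k n) = (n : ℝ) ^ ((k n : ℝ)) / 2 ^ (k n) := by
          rw [div_pow, Real.rpow_natCast]
        have key : (n : ℝ) ^ ((k n : ℝ)) =
            (n : ℝ) ^ (β * f n + γ * (k n : ℝ)) * (n : ℝ) ^ e := by
          rw [← Real.rpow_add hn0, hedef]
          ring_nf
        have split : (n : ℝ) ^ (β * f n + γ * (k n : ℝ)) =
            (n : ℝ) ^ (β * f n) * (n : ℝ) ^ (γ * (k n : ℝ)) := Real.rpow_add hn0 _ _
        rw [expand, expand2, key, split]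
        rw [le_div_iff₀ (by positivity : (0:ℝ) < 2 ^ (k n))]
        have h126 : (2 : ℝ) ^ (k n) * 6 ^ (k n) = 12 ^ (k n) := by
          rw [← mul_pow]; norm_num
        have hpos1 : (0 : ℝ) < (n : ℝ) ^ (β * f n) := Real.rpow_pos_of_pos hn0 _
        have hpos2 : (0 : ℝ) < (n : ℝ) ^ (γ * (k n : ℝ)) := Real.rpow_pos_of_pos hn0 _
        calc 2 * (n : ℝ) ^ (β * f n) * (6 ^ (k n) * (n : ℝ) ^ (γ * (k n : ℝ))) * 2 ^ (k n)
            = (2 * 12 ^ (k n)) * ((n : ℝ) ^ (β * f n) * (n : ℝ) ^ (γ * (k n : ℝ))) := by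
              rw [← h126]; ring
          _ ≤ (n : ℝ) ^ e * ((n : ℝ) ^ (β * f n) * (n : ℝ) ^ (γ * (k n : ℝ))) := by
              apply mul_le_mul_of_nonneg_right h12k (by positivity)
          _ = (n : ℝ) ^ (β * f n) * (n : ℝ) ^ (γ * (k n : ℝ)) * (n : ℝ) ^ e := by ring
      calc (2 : ℝ) * 2 ^ (v n) * ((k n + D n : ℕ) : ℝ) ^ (k n)
          ≤ 2 * (n : ℝ) ^ (β * f n) * (6 * (n : ℝ) ^ γ) ^ (k n) := by
            apply mul_le_mul (mul_le_mul_of_nonneg_left hvle (by norm_num)) hkD'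
              (by positivity) (by positivity)
        _ ≤ ((n : ℝ) / 2) ^ (k n) := hmid
        _ ≤ ((n - k n + 1 : ℕ) : ℝ) ^ (k n) := hhalf
    -- transfer to ℕ
    have hnat : 2 * 2 ^ (v n) * (k n + D n) ^ (k n) ≤ (n - k n + 1) ^ (k n) := by
      exact_mod_cast hmain
    have hchoose : 2 * (2 ^ (v n) * (k n + D n).choose (k n)) ≤ n.choose (k n) := by
      have hkfac : 0 < (k n).factorial := Nat.factorial_pos _
      apply Nat.le_of_mul_le_mul_right _ hkfac
      calc 2 * (2 ^ (v n) * (k n + D n).choose (k n)) * (k n).factorial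
          = 2 * 2 ^ (v n) * ((k n).factorial * (k n + D n).choose (k n)) := by ring
        _ = 2 * 2 ^ (v n) * (k n + D n).descFactorial (k n) := by
            rw [← Nat.descFactorial_eq_factorial_mul_choose]
        _ ≤ 2 * 2 ^ (v n) * (k n + D n) ^ (k n) :=
            Nat.mul_le_mul_left _ (Nat.descFactorial_le_pow _ _)
        _ ≤ (n - k n + 1) ^ (k n) := hnat
        _ = (n + 1 - k n) ^ (k n) := by congr 1; omega
        _ ≤ n.descFactorial (k n) := Nat.pow_sub_le_descFactorial n (k n)
        _ = (k n).factorial * n.choose (k n) := Nat.descFactorial_eq_factorial_mul_choose n (k n)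
        _ = n.choose (k n) * (k n).factorial := by ring
    -- counting
    set S := Finset.powersetCard (k n) (Finset.univ : Finset (Fin n)) with hSdef
    set bad := S.filter (fun P => (poolClosure (g n) P).card < k n + D n) with hbaddef
    have hScard : S.card = n.choose (k n) := by
      rw [hSdef, Finset.card_powersetCard, Finset.card_univ, Fintype.card_fin]
    have hbadle : bad.card ≤ 2 ^ (v n) * (k n + D n).choose (k n) := bad_card_le (g n)
    have h2bad : 2 * bad.card ≤ n.choose (k n) := le_trans (by omega) hchoose
    have hbadS : bad.card ≤ S.card := Finset.card_le_card (Finset.filter_subset _ _)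
    have hsumlow : (S.card - bad.card) * D n ≤
        ∑ P ∈ S, ((poolClosure (g n) P) \ P).card := sum_lower (g n)
    have hCpos : 0 < n.choose (k n) := Nat.choose_pos hknat
    have hCposR : (0 : ℝ) < (n.choose (k n) : ℝ) := by exact_mod_cast hCpos
    -- real arithmetic
    have hsumR : ((n.choose (k n) : ℝ) - bad.card) * (D n : ℝ) ≤
        ∑ P ∈ S, (((poolClosure (g n) P) \ P).card : ℝ) := by
      have hcast : (((S.card - bad.card) * D n : ℕ) : ℝ) =
          ((n.choose (k n) : ℝ) - bad.card) * (D n : ℝ) := by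
        rw [Nat.cast_mul, Nat.cast_sub hbadS, hScard]
      rw [← hcast]
      calc (((S.card - bad.card) * D n : ℕ) : ℝ)
          ≤ ((∑ P ∈ S, ((poolClosure (g n) P) \ P).card : ℕ) : ℝ) := by
            exact_mod_cast hsumlow
        _ = ∑ P ∈ S, (((poolClosure (g n) P) \ P).card : ℝ) := by push_cast; ring
    have hbadR : (bad.card : ℝ) ≤ (n.choose (k n) : ℝ) / 2 := by
      have : (2 * bad.card : ℝ) ≤ (n.choose (k n) : ℝ) := by exact_mod_cast h2bad
      linarith
    have hDpos : (0 : ℝ) ≤ (D n : ℝ) := Nat.cast_nonneg _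
    have hfinal : (n.choose (k n) : ℝ) / 2 * (D n : ℝ) ≤
        ∑ P ∈ S, (((poolClosure (g n) P) \ P).card : ℝ) := by
      refine le_trans ?_ hsumR
      apply mul_le_mul_of_nonneg_right _ hDpos
      linarith
    rw [ge_iff_le]
    calc (n : ℝ) ^ (1 - β / α - δ)
        ≤ (n : ℝ) ^ γ := Real.rpow_le_rpow_of_exponent_le hn1 (by rw [hγdef]; linarith)
      _ ≤ (D n : ℝ) / 2 := by linarith
      _ = (1 / (n.choose (k n) : ℝ)) * ((n.choose (k n) : ℝ) / 2 * (D n : ℝ)) := by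
          field_simp
      _ ≤ (1 / (n.choose (k n) : ℝ)) *
          ∑ P ∈ S, (((poolClosure (g n) P) \ P).card : ℝ) := by
          apply mul_le_mul_of_nonneg_left hfinal (by positivity)
  exact eventually_atTop.mp H
end

section
/- Fix reals p > 0 and α > 0, and for each n ≥ 3 let k_n = ⌈α · ln(n) / ln(ln(n))⌉. Then for every ε > 0 there exists N such that for all n ≥ N (with n > p), the binomial probability satisfies (n choose k_n) · (p/n)^{k_n} · (1 − p/n)^{n − k_n} ≥ n^{−α − ε}. -/
set_option maxHeartbeats 1000000

open Filter Real

theorem binomial_probability_lower_bound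
    (p α : ℝ) (hp : 0 < p) (hα : 0 < α)
    (k : ℕ → ℕ)
    (hk : ∀ n : ℕ, 3 ≤ n → k n = ⌈α * Real.log n / Real.log (Real.log n)⌉₊) :
    ∀ ε > 0, ∃ N : ℕ, ∀ n ≥ N, p < n →
      (n.choose (k n) : ℝ) * (p / n) ^ (k n) * (1 - p / n) ^ (n - k n) ≥
        (n : ℝ) ^ (-α - ε) := by
  intro ε hε
  have hL : Tendsto (fun n : ℕ => Real.log n) atTop atTop :=
    Real.tendsto_log_atTop.comp tendsto_natCast_atTop_atTop
  have hLL : Tendsto (fun n : ℕ => Real.log (Real.log n)) atTop atTop :=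
    Real.tendsto_log_atTop.comp hL
  have E0 : ∀ᶠ n : ℕ in atTop, 3 ≤ n := eventually_ge_atTop 3
  have E1 : ∀ᶠ n : ℕ in atTop, 1 ≤ Real.log n := hL.eventually_ge_atTop 1
  have E2 : ∀ᶠ n : ℕ in atTop, 1 ≤ Real.log (Real.log n) := hLL.eventually_ge_atTop 1
  have E3a : ∀ᶠ n : ℕ in atTop, 4 * α / p ≤ Real.log (Real.log n) :=
    hLL.eventually_ge_atTop _
  have E3b : ∀ᶠ n : ℕ in atTop, 4 / p ≤ Real.log n := hL.eventually_ge_atTop _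
  have E4 : ∀ᶠ n : ℕ in atTop, p * Real.log n ≤ n := by
    have h := (Real.isLittleO_log_id_atTop.comp_tendsto
      (tendsto_natCast_atTop_atTop (R := ℝ))).def (show (0:ℝ) < 1/p by positivity)
    filter_upwards [h, E1] with n h h1
    simp only [Function.comp, id] at h
    rw [Real.norm_eq_abs, Real.norm_eq_abs, abs_of_nonneg (by linarith),
      abs_of_nonneg (by positivity)] at h
    rw [mul_comm] at h ⊢
    calc Real.log n * p ≤ (1/p * n) * p := by nlinarith
      _ = n := by field_simp
  have E5 : ∀ᶠ n : ℕ in atTop, Real.exp (-p) / 2 ≤ (1 + (-p) / n) ^ n :=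
    (Real.tendsto_one_add_div_pow_exp (-p)).eventually_const_le
      (half_lt_self (Real.exp_pos _))
  have E6 : ∀ᶠ n : ℕ in atTop, p + Real.log 2 ≤ ε / 2 * Real.log n :=
    (hL.const_mul_atTop (show (0:ℝ) < ε/2 by positivity)).eventually_ge_atTop _
  have E7 : ∀ᶠ n : ℕ in atTop, Real.log (Real.log n) ≤ ε / 2 * Real.log n := by
    have h := (Real.isLittleO_log_id_atTop.comp_tendsto hL).def
      (show (0:ℝ) < ε/2 by positivity)
    filter_upwards [h, E1, E2] with n h h1 h2
    simp only [Function.comp, id] at h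
    rw [Real.norm_eq_abs, Real.norm_eq_abs, abs_of_nonneg (by linarith),
      abs_of_nonneg (by linarith)] at h
    exact h
  have H : ∀ᶠ n : ℕ in atTop, p < n →
      (n.choose (k n) : ℝ) * (p / n) ^ (k n) * (1 - p / n) ^ (n - k n) ≥
        (n : ℝ) ^ (-α - ε) := by
    filter_upwards [E0, E1, E2, E3a, E3b, E4, E5, E6, E7] with n h3 h1 h2 h3a h3b h4 h5 h6 h7 hpn
    set L := Real.log n with hLdef
    set LL := Real.log L with hLLdef
    set K := k n with hKdef
    have hn0 : (0:ℝ) < n := hp.trans hpn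
    have hL0 : 0 < L := by linarith
    have hLL0 : 0 < LL := by linarith
    have hkn : K = ⌈α * L / LL⌉₊ := hk n h3
    have hx : 0 < α * L / LL := by positivity
    have hK1 : 1 ≤ K := by
      rw [hkn]; exact Nat.one_le_iff_ne_zero.mpr (Nat.ceil_pos.mpr hx).ne'
    have hK0 : (0:ℝ) < K := by exact_mod_cast hK1
    have hKle : (K:ℝ) ≤ α * L / LL + 1 := by
      rw [hkn]; exact (Nat.ceil_lt_add_one hx.le).le
    -- 2K ≤ pL
    have h4a : 4 * α ≤ LL * p := (div_le_iff₀ hp).mp h3a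
    have h4b : 4 ≤ L * p := (div_le_iff₀ hp).mp h3b
    have hdiv : α * L / LL ≤ p * L / 4 := by
      rw [div_le_div_iff₀ hLL0 (by norm_num : (0:ℝ) < 4)]
      nlinarith
    have h2K : 2 * (K:ℝ) ≤ p * L := by nlinarith
    have hKn : 2 * (K:ℝ) ≤ n := le_trans h2K h4
    have hKnat : K ≤ n := by exact_mod_cast le_trans (by linarith : (K:ℝ) ≤ 2*K) hKn
    -- binomial lower bound, in ℕ
    have hchoose : (n - K)^K ≤ n.choose K * K^K := by
      calc (n - K)^K ≤ (n + 1 - K)^K := Nat.pow_le_pow_left (by omega) K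
        _ ≤ n.descFactorial K := Nat.pow_sub_le_descFactorial n K
        _ = Nat.factorial K * n.choose K := Nat.descFactorial_eq_factorial_mul_choose n K
        _ ≤ K^K * n.choose K := Nat.mul_le_mul_right _ (Nat.factorial_le_pow K)
        _ = n.choose K * K^K := Nat.mul_comm _ _
    have hchooseR : ((n:ℝ) - K)^K ≤ (n.choose K : ℝ) * (K:ℝ)^K := by
      have := hchoose
      have h' : (((n - K : ℕ) : ℝ))^K ≤ (n.choose K : ℝ) * (K:ℝ)^K := by exact_mod_cast this
      rwa [Nat.cast_sub hKnat] at h'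
    have hc1 : (((n:ℝ) - K) / K)^K ≤ (n.choose K : ℝ) := by
      rw [div_pow, div_le_iff₀ (by positivity)]
      exact hchooseR
    -- main first-factor bound
    have hbase : 1 / L ≤ ((n:ℝ) - K) / K * (p / n) := by
      rw [div_mul_div_comm]
      rw [div_le_div_iff₀ hL0 (by positivity)]
      nlinarith
    have hb0 : (0:ℝ) ≤ 1 / L := by positivity
    have hfirst : (1 / L)^K ≤ (n.choose K : ℝ) * (p / n)^K := by
      calc (1 / L)^K ≤ (((n:ℝ) - K) / K * (p / n))^K := pow_le_pow_left₀ hb0 hbase K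
        _ = (((n:ℝ) - K) / K)^K * (p / n)^K := mul_pow _ _ _
        _ ≤ (n.choose K : ℝ) * (p / n)^K := by
            apply mul_le_mul_of_nonneg_right hc1 (by positivity)
    have hexp1 : Real.exp (-((α + ε/2) * L)) ≤ (1 / L)^K := by
      have hKLL : (K:ℝ) * LL ≤ (α + ε/2) * L := by
        have h' : (K:ℝ) * LL ≤ (α * L / LL + 1) * LL :=
          mul_le_mul_of_nonneg_right hKle hLL0.le
        have heq : (α * L / LL + 1) * LL = α * L + LL := by field_simp
        rw [heq] at h'
        linarith
      have h1L : (1:ℝ) / L = Real.exp (-LL) := by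
        rw [Real.exp_neg, Real.exp_log hL0, one_div]
      rw [h1L, ← Real.exp_nat_mul]
      apply Real.exp_le_exp.mpr
      have : (K:ℝ) * (-LL) = -((K:ℝ) * LL) := by ring
      rw [this]
      linarith
    -- second factor
    have hpn1 : p / n < 1 := (div_lt_one hn0).mpr hpn
    have hq0 : (0:ℝ) ≤ 1 - p / n := by linarith
    have hq1 : 1 - p / n ≤ 1 := by
      have : 0 < p / n := by positivity
      linarith
    have hsecond : Real.exp (-(ε/2 * L)) ≤ (1 - p / n)^(n - K) := by
      have h5' : Real.exp (-p) / 2 ≤ (1 - p / n)^n := by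
        have heq : (1:ℝ) + (-p) / n = 1 - p / n := by ring
        rwa [heq] at h5
      have hmono : (1 - p / n)^n ≤ (1 - p / n)^(n - K) :=
        pow_le_pow_of_le_one hq0 hq1 (Nat.sub_le n K)
      have hexp2 : Real.exp (-(ε/2 * L)) ≤ Real.exp (-p) / 2 := by
        rw [show Real.exp (-p) / 2 = Real.exp (-p - Real.log 2) by
          rw [Real.exp_sub, Real.exp_log two_pos]]
        apply Real.exp_le_exp.mpr
        linarith
      linarith
    -- combine
    have hrpow : (n:ℝ) ^ (-α - ε) =
        Real.exp (-((α + ε/2) * L)) * Real.exp (-(ε/2 * L)) := by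
      rw [← Real.exp_add, Real.rpow_def_of_pos hn0]
      ring_nf
      rw [hLdef]; ring_nf
    rw [ge_iff_le, hrpow]
    calc Real.exp (-((α + ε/2) * L)) * Real.exp (-(ε/2 * L))
        ≤ ((n.choose K : ℝ) * (p / n)^K) * ((1 - p / n)^(n - K)) := by
          apply mul_le_mul (le_trans hexp1 hfirst) hsecond (Real.exp_pos _).le
          positivity
      _ = (n.choose K : ℝ) * (p / n)^K * (1 - p / n)^(n - K) := rfl
  obtain ⟨N, hN⟩ := eventually_atTop.mp H
  exact ⟨N, hN⟩
end

section
/- Let n, v be natural numbers and q ∈ [0,1] a real. Let I : Fin n → Fin v → Bool be a random incidence matrix whose n·v entries are independent, each equal to true with probability q (the product of Bernoulli(q) distributions, as a PMF). Fix P ⊆ Fin n with |P| = i. Call an object x ∉ P an unresolved negative for I if for every pool y : Fin v with I x y = true there exists z ∈ P with I z y = true. Then the expected number of unresolved negatives equals (n − i) · (1 − q·(1 − q)^i)^v. -/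
open Finset

/-- Single-column computation. -/
lemma col_sum_aux (n : ℕ) (q : ℝ) (P : Finset (Fin n)) (x : Fin n) (hx : x ∉ P) :
    ∑ c : Fin n → Bool, (∏ z : Fin n, (if c z then q else 1 - q)) *
      (if (c x = true → ∃ z ∈ P, c z = true) then (1:ℝ) else 0)
    = 1 - q * (1 - q) ^ P.card := by
  have h1 : ∀ c : Fin n → Bool,
      (if (c x = true → ∃ z ∈ P, c z = true) then (1:ℝ) else 0)
      = 1 - (if (c x = true ∧ ∀ z ∈ P, c z = false) then (1:ℝ) else 0) := by
    intro c
    by_cases h : c x = true → ∃ z ∈ P, c z = true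
    · rw [if_pos h, if_neg, sub_zero]
      rintro ⟨hcx, hall⟩
      obtain ⟨z, hz, hcz⟩ := h hcx
      rw [hall z hz] at hcz
      exact Bool.false_ne_true hcz
    · push_neg at h
      rw [if_neg, if_pos ⟨h.1, fun z hz => by simpa using h.2 z hz⟩, sub_self]
      push_neg
      exact h
  simp_rw [h1, mul_sub, mul_one, Finset.sum_sub_distrib]
  have A : ∑ c : Fin n → Bool, ∏ z : Fin n, (if c z then q else 1 - q) = 1 := by
    have := Finset.prod_univ_sum (fun _ : Fin n => (Finset.univ : Finset Bool))
      (fun _ b => if b then q else 1 - q)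
    rw [Fintype.piFinset_univ] at this
    rw [← this]
    have : ∀ _z : Fin n, (∑ b : Bool, (if b then q else 1 - q)) = 1 := by
      intro z; rw [Fintype.sum_bool]; simp
    simp [this]
  have B : ∑ c : Fin n → Bool, (∏ z : Fin n, (if c z then q else 1 - q)) *
      (if (c x = true ∧ ∀ z ∈ P, c z = false) then (1:ℝ) else 0)
      = q * (1 - q) ^ P.card := by
    have hrw : ∀ c : Fin n → Bool,
        (∏ z : Fin n, (if c z then q else 1 - q)) *
          (if (c x = true ∧ ∀ z ∈ P, c z = false) then (1:ℝ) else 0)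
        = ∏ z : Fin n, ((if c z then q else 1 - q) *
            (if z = x then (if c z then (1:ℝ) else 0)
              else if z ∈ P then (if c z then 0 else 1) else 1)) := by
      intro c
      rw [Finset.prod_mul_distrib]
      congr 1
      by_cases h : c x = true ∧ ∀ z ∈ P, c z = false
      · rw [if_pos h]
        symm
        apply Finset.prod_eq_one
        intro z _
        by_cases hzx : z = x
        · subst hzx; simp [h.1]
        · by_cases hzP : z ∈ P
          · simp [hzx, hzP, h.2 z hzP]
          · simp [hzx, hzP]
      · rw [if_neg h]
        symm
        push_neg at h
        by_cases hcx : c x = true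
        · obtain ⟨z, hz, hcz⟩ := h hcx
          have hct : c z = true := by simpa using hcz
          have hzx : z ≠ x := fun e => hx (e ▸ hz)
          exact Finset.prod_eq_zero (Finset.mem_univ z) (by simp [hzx, hz, hct])
        · exact Finset.prod_eq_zero (Finset.mem_univ x)
            (by simp [Bool.not_eq_true] at hcx; simp [hcx])
    simp_rw [hrw]
    have key := Finset.prod_univ_sum (fun _ : Fin n => (Finset.univ : Finset Bool))
      (fun z b => (if b then q else 1 - q) *
          (if z = x then (if b then (1:ℝ) else 0)
            else if z ∈ P then (if b then 0 else 1) else 1))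
    rw [Fintype.piFinset_univ] at key
    rw [← key]
    have hF : ∀ z : Fin n,
        (∑ b : Bool, (if b then q else 1 - q) *
          (if z = x then (if b then (1:ℝ) else 0)
            else if z ∈ P then (if b then 0 else 1) else 1))
        = if z = x then q else if z ∈ P then 1 - q else 1 := by
      intro z
      rw [Fintype.sum_bool]
      by_cases hzx : z = x
      · simp [hzx]
      · by_cases hzP : z ∈ P <;> simp [hzx, hzP]
    rw [Finset.prod_congr rfl (fun z _ => hF z)]
    rw [← Finset.prod_subset (Finset.subset_univ (insert x P))
      (fun z _ hz => by
        simp only [Finset.mem_insert, not_or] at hz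
        rw [if_neg hz.1, if_neg hz.2])]
    rw [Finset.prod_insert hx, if_pos rfl]
    congr 1
    rw [Finset.prod_congr rfl (fun z hz => by
      have hzx : z ≠ x := fun e => hx (e ▸ hz)
      rw [if_neg hzx, if_pos hz])]
    exact Finset.prod_const _
  rw [A, B]

theorem expected_unresolved_negatives_random_matrix
    (n v : ℕ) (q : ℝ) (hq0 : 0 ≤ q) (hq1 : q ≤ 1)
    (P : Finset (Fin n)) (i : ℕ) (hP : P.card = i) :
    ∑ I : Fin n → Fin v → Bool,
        (∏ x : Fin n, ∏ y : Fin v, (if I x y then q else 1 - q)) *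
          ((Finset.univ.filter (fun x : Fin n =>
              x ∉ P ∧ ∀ y : Fin v, I x y = true → ∃ z ∈ P, I z y = true)).card : ℝ) =
      ((n : ℝ) - (i : ℝ)) * (1 - q * (1 - q) ^ i) ^ v := by
  subst hP
  have hcard : ∀ I : Fin n → Fin v → Bool,
      ((Finset.univ.filter (fun x : Fin n =>
          x ∉ P ∧ ∀ y : Fin v, I x y = true → ∃ z ∈ P, I z y = true)).card : ℝ)
      = ∑ x : Fin n, (if x ∉ P ∧ ∀ y : Fin v, I x y = true → ∃ z ∈ P, I z y = true
          then (1:ℝ) else 0) := by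
    intro I
    rw [Finset.card_filter]
    push_cast
    exact Finset.sum_congr rfl (fun x _ => by split_ifs <;> simp)
  simp_rw [hcard, Finset.mul_sum]
  rw [Finset.sum_comm]
  have inner : ∀ x : Fin n,
      (∑ I : Fin n → Fin v → Bool,
        (∏ z : Fin n, ∏ y : Fin v, (if I z y then q else 1 - q)) *
          (if x ∉ P ∧ ∀ y : Fin v, I x y = true → ∃ z ∈ P, I z y = true
            then (1:ℝ) else 0))
      = if x ∈ P then 0 else (1 - q * (1 - q) ^ P.card) ^ v := by
    intro x
    by_cases hx : x ∈ P
    · rw [if_pos hx]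
      apply Finset.sum_eq_zero
      intro I _
      rw [if_neg (by rintro ⟨h1, _⟩; exact h1 hx), mul_zero]
    · rw [if_neg hx]
      have hsimp : ∀ I : Fin n → Fin v → Bool,
          (if x ∉ P ∧ ∀ y : Fin v, I x y = true → ∃ z ∈ P, I z y = true
            then (1:ℝ) else 0)
          = if ∀ y : Fin v, I x y = true → ∃ z ∈ P, I z y = true then (1:ℝ) else 0 := by
        intro I; simp [hx]
      simp_rw [hsimp]
      -- reindex by columns
      refine Eq.trans (Fintype.sum_equiv (Equiv.piComm (fun (_ : Fin n) (_ : Fin v) => Bool))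
        _ (fun J : Fin v → Fin n → Bool =>
            (∏ z : Fin n, ∏ y : Fin v, (if J y z then q else 1 - q)) *
              (if ∀ y : Fin v, J y x = true → ∃ z ∈ P, J y z = true then (1:ℝ) else 0))
        (fun I => rfl)) ?_
      have e1 : ∀ J : Fin v → Fin n → Bool,
          (∏ z : Fin n, ∏ y : Fin v, (if J y z then q else 1 - q)) *
            (if ∀ y : Fin v, J y x = true → ∃ z ∈ P, J y z = true then (1:ℝ) else 0)
          = ∏ y : Fin v, ((∏ z : Fin n, (if J y z then q else 1 - q)) *
              (if (J y x = true → ∃ z ∈ P, J y z = true) then (1:ℝ) else 0)) := by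
        intro J
        rw [Finset.prod_comm, Finset.prod_mul_distrib]
        congr 1
        rw [Finset.prod_boole]
        simp
      simp_rw [e1]
      have key := Finset.prod_univ_sum (fun _ : Fin v => (Finset.univ : Finset (Fin n → Bool)))
        (fun _ c => (∏ z : Fin n, (if c z then q else 1 - q)) *
            (if (c x = true → ∃ z ∈ P, c z = true) then (1:ℝ) else 0))
      rw [Fintype.piFinset_univ] at key
      rw [← key]
      rw [Finset.prod_congr rfl (fun y _ => col_sum_aux n q P x hx)]
      simp [Finset.prod_const, Finset.card_univ]
  simp_rw [inner]
  rw [Finset.sum_ite, Finset.sum_const_zero, zero_add, Finset.sum_const, nsmul_eq_mul]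
  congr 1
  have hfil : Finset.filter (fun x => ¬ x ∈ P) Finset.univ = Pᶜ := by ext z; simp
  rw [hfil, Finset.card_compl, Fintype.card_fin,
    Nat.cast_sub ((Finset.card_le_univ P).trans_eq (Fintype.card_fin n))]
end

section
/- Let n ≥ 1 and v be natural numbers and let p, q be reals with 0 < p ≤ n and 0 ≤ q ≤ 1. Then Σ_{i=0}^{n} (n choose i) · (p/n)^i · (1 − p/n)^{n−i} · (n − i) · (1 − q·(1−q)^i)^v ≤ n · Σ_{i=0}^{∞} (p^i / i!) · exp(−q·(1−q)^i · v), where the right-hand side is a convergent infinite series of nonnegative terms. -/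
theorem binomial_unresolved_negatives_upper_bound
    (n v : ℕ) (hn : 1 ≤ n) (p q : ℝ) (hp : 0 < p) (hpn : p ≤ n)
    (hq0 : 0 ≤ q) (hq1 : q ≤ 1) :
    (Summable fun i : ℕ =>
        p ^ i / (i.factorial : ℝ) * Real.exp (-(q * (1 - q) ^ i * v))) ∧
    ∑ i ∈ Finset.range (n + 1),
        (n.choose i : ℝ) * (p / n) ^ i * (1 - p / n) ^ (n - i) * ((n : ℝ) - i) *
          (1 - q * (1 - q) ^ i) ^ v ≤
      (n : ℝ) *
        ∑' i : ℕ, p ^ i / (i.factorial : ℝ) * Real.exp (-(q * (1 - q) ^ i * v)) := by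
  have hn0 : (0:ℝ) < n := by exact_mod_cast hn
  set f : ℕ → ℝ := fun i => p ^ i / (i.factorial : ℝ) * Real.exp (-(q * (1 - q) ^ i * v))
  have hfnonneg : ∀ i, 0 ≤ f i := fun i => by
    have : 0 ≤ p ^ i / (i.factorial : ℝ) := by positivity
    exact mul_nonneg this (Real.exp_pos _).le
  have hsum : Summable f := by
    refine Summable.of_nonneg_of_le hfnonneg (fun i => ?_)
      (Real.summable_pow_div_factorial p)
    have h1 : Real.exp (-(q * (1 - q) ^ i * v)) ≤ 1 := by
      apply Real.exp_le_one_iff.mpr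
      have h1q : (0:ℝ) ≤ 1 - q := by linarith
      have : 0 ≤ q * (1 - q) ^ i * v := by positivity
      linarith
    calc f i ≤ p ^ i / (i.factorial : ℝ) * 1 := by
          apply mul_le_mul_of_nonneg_left h1 (by positivity)
      _ = p ^ i / (i.factorial : ℝ) := mul_one _
  refine ⟨hsum, ?_⟩
  have key : ∀ i ∈ Finset.range (n + 1),
      (n.choose i : ℝ) * (p / n) ^ i * (1 - p / n) ^ (n - i) * ((n : ℝ) - i) *
          (1 - q * (1 - q) ^ i) ^ v ≤ (n : ℝ) * f i := by
    intro i hi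
    have hi' : i ≤ n := Nat.lt_succ_iff.mp (Finset.mem_range.mp hi)
    have h1q : (0:ℝ) ≤ 1 - q := by linarith
    have hx0 : 0 ≤ q * (1 - q) ^ i := by positivity
    have hx1 : q * (1 - q) ^ i ≤ 1 := by
      have hpow : (1 - q) ^ i ≤ 1 := pow_le_one₀ h1q (by linarith)
      calc q * (1 - q) ^ i ≤ q * 1 := by
              exact mul_le_mul_of_nonneg_left hpow hq0
        _ ≤ 1 := by linarith
    have hA : (n.choose i : ℝ) * (p / n) ^ i ≤ p ^ i / (i.factorial : ℝ) := by
      have hc : (n.choose i : ℝ) ≤ (n:ℝ) ^ i / (i.factorial : ℝ) :=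
        Nat.choose_le_pow_div i n
      have : (n.choose i : ℝ) * (p / n) ^ i ≤ ((n:ℝ) ^ i / (i.factorial : ℝ)) * (p / n) ^ i :=
        mul_le_mul_of_nonneg_right hc (by positivity)
      calc (n.choose i : ℝ) * (p / n) ^ i
          ≤ ((n:ℝ) ^ i / (i.factorial : ℝ)) * (p / n) ^ i := this
        _ = p ^ i / (i.factorial : ℝ) := by
            rw [div_pow]; field_simp
    have hB : (1 - p / n) ^ (n - i) ≤ 1 := by
      apply pow_le_one₀
      · have : p / n ≤ 1 := by
          rw [div_le_one hn0]; exact hpn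
        linarith
      · have : 0 < p / n := by positivity
        linarith
    have hB0 : (0:ℝ) ≤ 1 - p / n := by
      have : p / n ≤ 1 := by rw [div_le_one hn0]; exact hpn
      linarith
    have hC : (n:ℝ) - i ≤ n := by
      have : (0:ℝ) ≤ i := by positivity
      linarith
    have hC0 : (0:ℝ) ≤ (n:ℝ) - i := by
      have : (i:ℝ) ≤ n := by exact_mod_cast hi'
      linarith
    have hD : (1 - q * (1 - q) ^ i) ^ v ≤ Real.exp (-(q * (1 - q) ^ i * v)) := by
      have hexp : 1 - q * (1 - q) ^ i ≤ Real.exp (-(q * (1 - q) ^ i)) := by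
        have := Real.add_one_le_exp (-(q * (1 - q) ^ i))
        linarith
      calc (1 - q * (1 - q) ^ i) ^ v
          ≤ (Real.exp (-(q * (1 - q) ^ i))) ^ v :=
            pow_le_pow_left₀ (by linarith) hexp v
        _ = Real.exp (-(q * (1 - q) ^ i * v)) := by
            rw [← Real.exp_nat_mul]; ring_nf
    have hD0 : (0:ℝ) ≤ (1 - q * (1 - q) ^ i) ^ v := pow_nonneg (by linarith) v
    have hA0 : (0:ℝ) ≤ (n.choose i : ℝ) * (p / n) ^ i := by positivity
    calc (n.choose i : ℝ) * (p / n) ^ i * (1 - p / n) ^ (n - i) * ((n : ℝ) - i) *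
            (1 - q * (1 - q) ^ i) ^ v
        ≤ (p ^ i / (i.factorial : ℝ)) * 1 * (n:ℝ) * Real.exp (-(q * (1 - q) ^ i * v)) := by
          apply mul_le_mul
          · apply mul_le_mul
            · apply mul_le_mul hA hB (by positivity) (by positivity)
            · exact hC
            · exact hC0
            · positivity
          · exact hD
          · exact hD0
          · positivity
      _ = (n : ℝ) * f i := by simp [f]; ring
  calc ∑ i ∈ Finset.range (n + 1),
        (n.choose i : ℝ) * (p / n) ^ i * (1 - p / n) ^ (n - i) * ((n : ℝ) - i) *
          (1 - q * (1 - q) ^ i) ^ v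
      ≤ ∑ i ∈ Finset.range (n + 1), (n : ℝ) * f i := Finset.sum_le_sum key
    _ = (n : ℝ) * ∑ i ∈ Finset.range (n + 1), f i := by rw [Finset.mul_sum]
    _ ≤ (n : ℝ) * ∑' i, f i := by
        apply mul_le_mul_of_nonneg_left _ hn0.le
        exact Summable.sum_le_tsum _ (fun i _ => hfnonneg i) hsum
end

section
/- Fix reals p > 0 and ε > 0. For n ≥ 16 set q_n = ln(ln(n)) / ln(n) and v_n = e^{1+ε} · (ln n)² / ln(ln(n)). Then there exists a constant C > 0 and N such that for all n ≥ N, n · Σ_{i=0}^{∞} (p^i / i!) · exp(−q_n · (1 − q_n)^i · v_n) ≤ C · n^{−ε/2}. -/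
open Real Filter Finset

private lemma rd_eventual (p a c b : ℝ) (hp : 0 < p) (ha0 : 0 < a) (hac : a < c) (hc0 : 0 < c)
    (hb0 : 0 < b) (hb1 : b < 1) :
    ∀ᶠ y : ℝ in atTop,
      1 ≤ Real.log y ∧ Real.log y / y ≤ 1 - a / c ∧
      max (2 * p) 1 * Real.log y ≤ a * y ∧
      p * Real.exp 1 * Real.log y * Real.exp (b * Real.log y) ≤ a * y := by
  have h1 : ∀ᶠ y : ℝ in atTop, 1 ≤ Real.log y :=
    Real.tendsto_log_atTop.eventually_ge_atTop 1
  have hd : (0:ℝ) < 1 - a / c := by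
    have : a / c < 1 := (div_lt_one hc0).mpr hac
    linarith
  have h2 : ∀ᶠ y : ℝ in atTop, ‖Real.log y‖ ≤ (1 - a / c) * ‖id y‖ :=
    Real.isLittleO_log_id_atTop.bound hd
  have hK : (0:ℝ) < max (2 * p) 1 := lt_max_of_lt_right one_pos
  have h3 : ∀ᶠ y : ℝ in atTop, ‖Real.log y‖ ≤ (a / max (2 * p) 1) * ‖id y‖ :=
    Real.isLittleO_log_id_atTop.bound (by positivity)
  have h4s : ∀ᶠ s : ℝ in atTop,
      p * Real.exp 1 * s * Real.exp (b * s) ≤ a * Real.exp s := by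
    have hb1' : (0:ℝ) < 1 - b := by linarith
    have ht : Tendsto (fun u : ℝ => Real.exp u / u ^ 1) atTop atTop :=
      Real.tendsto_exp_div_pow_atTop 1
    have ht2 : Tendsto (fun s : ℝ => Real.exp ((1 - b) * s) / ((1 - b) * s)) atTop atTop := by
      have := ht.comp (tendsto_id.const_mul_atTop hb1')
      simpa [Function.comp_def] using this
    filter_upwards [ht2.eventually_ge_atTop (p * Real.exp 1 / (a * (1 - b))),
      eventually_gt_atTop 0] with s hs hs0
    have hbs : 0 < (1 - b) * s := by positivity
    rw [le_div_iff₀ hbs] at hs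
    have key : p * Real.exp 1 * s ≤ a * Real.exp ((1 - b) * s) := by
      have h : p * Real.exp 1 * s / a ≤ Real.exp ((1 - b) * s) := by
        calc p * Real.exp 1 * s / a = p * Real.exp 1 / (a * (1 - b)) * ((1 - b) * s) := by
              field_simp
          _ ≤ Real.exp ((1 - b) * s) := hs
      rw [div_le_iff₀ ha0] at h
      linarith [h]
    have hsplit : Real.exp s = Real.exp ((1 - b) * s) * Real.exp (b * s) := by
      rw [← Real.exp_add]; ring_nf
    rw [hsplit]
    have he : 0 < Real.exp (b * s) := Real.exp_pos _
    calc p * Real.exp 1 * s * Real.exp (b * s)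
        ≤ a * Real.exp ((1 - b) * s) * Real.exp (b * s) :=
          mul_le_mul_of_nonneg_right key he.le
      _ = a * (Real.exp ((1 - b) * s) * Real.exp (b * s)) := by ring
  have h4 : ∀ᶠ y : ℝ in atTop,
      p * Real.exp 1 * Real.log y * Real.exp (b * Real.log y) ≤ a * y := by
    filter_upwards [Real.tendsto_log_atTop.eventually h4s, eventually_gt_atTop 0] with y hy hy0
    calc p * Real.exp 1 * Real.log y * Real.exp (b * Real.log y)
        ≤ a * Real.exp (Real.log y) := hy
      _ = a * y := by rw [Real.exp_log hy0]
  filter_upwards [h1, h2, h3, h4, eventually_gt_atTop 0] with y h1 h2 h3 h4 hy0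
  refine ⟨h1, ?_, ?_, h4⟩
  · rw [div_le_iff₀ hy0]
    calc Real.log y = ‖Real.log y‖ := by rw [Real.norm_eq_abs, abs_of_nonneg (by linarith)]
      _ ≤ (1 - a / c) * ‖id y‖ := h2
      _ = (1 - a / c) * y := by rw [id, Real.norm_eq_abs, abs_of_pos hy0]
  · have hlog : Real.log y ≤ (a / max (2 * p) 1) * y := by
      calc Real.log y = ‖Real.log y‖ := by rw [Real.norm_eq_abs, abs_of_nonneg (by linarith)]
        _ ≤ (a / max (2 * p) 1) * ‖id y‖ := h3
        _ = (a / max (2 * p) 1) * y := by rw [id, Real.norm_eq_abs, abs_of_pos hy0]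
    calc max (2 * p) 1 * Real.log y ≤ max (2 * p) 1 * ((a / max (2 * p) 1) * y) :=
          mul_le_mul_of_nonneg_left hlog hK.le
      _ = a * y := by field_simp

theorem series_bound_for_random_design
    (p ε : ℝ) (hp : 0 < p) (hε : 0 < ε) :
    ∃ C > (0 : ℝ), ∃ N : ℕ, ∀ n : ℕ, N ≤ n → 16 ≤ n →
      (n : ℝ) *
          ∑' i : ℕ, p ^ i / (i.factorial : ℝ) *
            Real.exp (-(Real.log (Real.log n) / Real.log n *
              (1 - Real.log (Real.log n) / Real.log n) ^ i *
              (Real.exp (1 + ε) * (Real.log n) ^ 2 / Real.log (Real.log n)))) ≤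
        C * (n : ℝ) ^ (-(ε / 2)) := by
  set c : ℝ := 1 + ε - Real.log (1 + ε / 2) with hc_def
  set a : ℝ := (c + (1 + ε / 2)) / 2 with ha_def
  set b : ℝ := ((1 + ε / 2) / a + 1) / 2 with hb_def
  have hlogε : Real.log (1 + ε / 2) < ε / 2 := by
    have h := Real.log_lt_sub_one_of_pos (by linarith : (0:ℝ) < 1 + ε / 2)
      (by intro h; nlinarith [h] : (1:ℝ) + ε / 2 ≠ 1)
    linarith
  have hεc : 1 + ε / 2 < c := by rw [hc_def]; linarith
  have hc0 : 0 < c := lt_trans (by linarith : (0:ℝ) < 1 + ε / 2) hεc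
  have ha1 : 1 + ε / 2 < a := by rw [ha_def]; linarith
  have hac : a < c := by rw [ha_def]; linarith
  have ha0 : 0 < a := by linarith
  have hb0 : 0 < b := by rw [hb_def]; positivity
  have hb1 : b < 1 := by
    rw [hb_def]
    have : (1 + ε / 2) / a < 1 := (div_lt_one ha0).mpr ha1
    linarith
  have hab : 1 + ε / 2 < a * b := by
    have : a * b = ((1 + ε / 2) + a) / 2 := by
      rw [hb_def]; field_simp
    rw [this]; linarith
  -- the eventuality, pulled back along n ↦ log n, plus linear condition
  have h5 : ∀ᶠ y : ℝ in atTop, (1 + ε / 2) * y + Real.log 2 ≤ a * b * y := by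
    filter_upwards [eventually_ge_atTop (Real.log 2 / (a * b - (1 + ε / 2))),
      eventually_gt_atTop 0] with y hy hy0
    rw [div_le_iff₀ (by linarith : (0:ℝ) < a * b - (1 + ε / 2))] at hy
    nlinarith [hy]
  have hev := (rd_eventual p a c b hp ha0 hac hc0 hb0 hb1).and h5
  have hevn : ∀ᶠ n : ℕ in atTop,
      ((1 ≤ Real.log (Real.log n) ∧
        Real.log (Real.log n) / Real.log n ≤ 1 - a / c ∧
        max (2 * p) 1 * Real.log (Real.log n) ≤ a * Real.log n ∧
        p * Real.exp 1 * Real.log (Real.log n) *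
          Real.exp (b * Real.log (Real.log n)) ≤ a * Real.log n) ∧
      (1 + ε / 2) * Real.log n + Real.log 2 ≤ a * b * Real.log n) :=
    (Real.tendsto_log_atTop.comp tendsto_natCast_atTop_atTop).eventually hev
  obtain ⟨N, hN⟩ := eventually_atTop.mp hevn
  refine ⟨Real.exp p + 1, by positivity, N, ?_⟩
  intro n hn h16
  obtain ⟨⟨ht1, hqbound, hM2p, hc4⟩, hc5⟩ := hN n hn
  set x : ℝ := Real.log n with hx_def
  set t : ℝ := Real.log x with ht_def
  have hn0 : (0:ℝ) < n := by positivity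
  have hx1 : 1 < x := by
    rw [hx_def, ← Real.log_exp 1]
    apply Real.log_lt_log (Real.exp_pos 1)
    calc Real.exp 1 < 2.7182818286 := Real.exp_one_lt_d9
      _ ≤ (16:ℝ) := by norm_num
      _ ≤ (n:ℝ) := by exact_mod_cast h16
  have hx0 : 0 < x := by linarith
  have ht0 : 0 < t := by linarith
  set q : ℝ := t / x with hq_def
  have hq0 : 0 < q := div_pos ht0 hx0
  have hq1 : q ≤ 1 - a / c := hqbound
  have hac0 : 0 < a / c := by positivity
  have h1q : 0 < 1 - q := by linarith
  have h1q' : a / c ≤ 1 - q := by linarith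
  set v : ℝ := Real.exp (1 + ε) * x ^ 2 / t with hv_def
  have hv0 : 0 < v := div_pos (mul_pos (Real.exp_pos _) (pow_pos hx0 2)) ht0
  have hqv : q * v = Real.exp (1 + ε) * x := by
    rw [hq_def, hv_def]; field_simp [ht0.ne', hx0.ne']
  set M : ℕ := ⌈a * x / t⌉₊ with hM_def
  have hz0 : 0 < a * x / t := div_pos (mul_pos ha0 hx0) ht0
  have hzM : a * x / t ≤ (M : ℝ) := Nat.le_ceil _
  have hM0 : 0 < M := Nat.ceil_pos.mpr hz0
  have hM2p' : 2 * p ≤ (M : ℝ) := by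
    have h1 : 2 * p * t ≤ a * x := by
      calc 2 * p * t ≤ max (2 * p) 1 * t := by
            apply mul_le_mul_of_nonneg_right (le_max_left _ _) ht0.le
        _ ≤ a * x := hM2p
    calc 2 * p = 2 * p * t / t := by field_simp [ht0.ne']
      _ ≤ a * x / t := by gcongr
      _ ≤ (M:ℝ) := hzM
  have hceil : ∀ i : ℕ, i < M → (i : ℝ) < a * x / t := fun i hi => Nat.lt_ceil.mp hi
  clear_value c a b x t q v M
  set f : ℕ → ℝ := fun i => p ^ i / (i.factorial : ℝ) *
    Real.exp (-(q * (1 - q) ^ i * v)) with hf_def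
  have hf_nonneg : ∀ i, 0 ≤ f i := by
    intro i
    apply mul_nonneg (by positivity) (Real.exp_pos _).le
  have hf_le : ∀ i, f i ≤ p ^ i / (i.factorial : ℝ) := by
    intro i
    have hE : 0 ≤ q * (1 - q) ^ i * v :=
      mul_nonneg (mul_nonneg hq0.le (pow_nonneg (by linarith) i)) hv0.le
    calc f i ≤ p ^ i / (i.factorial : ℝ) * 1 := by
          apply mul_le_mul_of_nonneg_left _ (by positivity)
          rw [Real.exp_le_one_iff]; linarith
      _ = p ^ i / (i.factorial : ℝ) := mul_one _
  have hf_bound : ∀ i : ℕ, (1 + ε / 2) * x ≤ q * (1 - q) ^ i * v →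
      f i ≤ p ^ i / (i.factorial : ℝ) * Real.exp (-((1 + ε / 2) * x)) := by
    intro i hi
    apply mul_le_mul_of_nonneg_left _ (by positivity)
    apply Real.exp_le_exp.mpr
    linarith
  have hsum : Summable f :=
    Summable.of_nonneg_of_le hf_nonneg hf_le (Real.summable_pow_div_factorial p)
  clear_value f
  -- head bound
  have head : ∑ i ∈ range M, f i ≤ Real.exp p * Real.exp (-((1 + ε / 2) * x)) := by
    have hterm : ∀ i ∈ range M, f i ≤ p ^ i / (i.factorial : ℝ) *
        Real.exp (-((1 + ε / 2) * x)) := by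
      intro i hi
      rw [mem_range] at hi
      apply hf_bound
      have hiq : (i : ℝ) * q < a := by
        have hlt : (i : ℝ) < a * x / t := hceil i hi
        calc (i:ℝ) * q < (a * x / t) * q := mul_lt_mul_of_pos_right hlt hq0
          _ = a := by rw [hq_def]; field_simp [ht0.ne', hx0.ne']
      have hpow : Real.exp (-c) ≤ (1 - q) ^ i := by
        have hrw : (1 - q : ℝ) ^ i = Real.exp ((i : ℝ) * Real.log (1 - q)) := by
          rw [Real.exp_nat_mul, Real.exp_log h1q]
        rw [hrw]
        apply Real.exp_le_exp.mpr
        have hlg : -Real.log (1 - q) ≤ q / (1 - q) := by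
          have h := Real.log_le_sub_one_of_pos (inv_pos.mpr h1q)
          rw [← Real.log_inv]
          calc Real.log (1 - q)⁻¹ ≤ (1 - q)⁻¹ - 1 := h
            _ = q / (1 - q) := by field_simp; ring
        have h2 : (i : ℝ) * (-Real.log (1 - q)) ≤ (i : ℝ) * (q / (1 - q)) :=
          mul_le_mul_of_nonneg_left hlg (Nat.cast_nonneg i)
        have h3 : (i : ℝ) * (q / (1 - q)) ≤ a / (1 - q) := by
          rw [mul_div_assoc']
          gcongr

        have h4 : a / (1 - q) ≤ c := by
          rw [div_le_iff₀ h1q]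
          calc a = c * (a / c) := by field_simp
            _ ≤ c * (1 - q) := mul_le_mul_of_nonneg_left h1q' hc0.le
        linarith
      have harg : 1 + ε - c = Real.log (1 + ε / 2) := by rw [hc_def]; ring
      have hexpc : Real.exp (1 + ε - c) = 1 + ε / 2 := by
        rw [harg, Real.exp_log (by linarith)]
      calc (1 + ε / 2) * x = Real.exp (1 + ε - c) * x := by rw [hexpc]
        _ = Real.exp (-c) * (Real.exp (1 + ε) * x) := by
            rw [show (1 + ε - c : ℝ) = -c + (1 + ε) by ring, Real.exp_add]; ring
        _ ≤ (1 - q) ^ i * (Real.exp (1 + ε) * x) :=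
            mul_le_mul_of_nonneg_right hpow (mul_nonneg (Real.exp_pos _).le hx0.le)
        _ = (1 - q) ^ i * (q * v) := by rw [hqv]
        _ = q * (1 - q) ^ i * v := by ring
    calc ∑ i ∈ range M, f i ≤ ∑ i ∈ range M, p ^ i / (i.factorial : ℝ) *
          Real.exp (-((1 + ε / 2) * x)) := Finset.sum_le_sum hterm
      _ = (∑ i ∈ range M, p ^ i / (i.factorial : ℝ)) * Real.exp (-((1 + ε / 2) * x)) := by
          rw [← Finset.sum_mul]
      _ ≤ Real.exp p * Real.exp (-((1 + ε / 2) * x)) := by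
          apply mul_le_mul_of_nonneg_right (Real.sum_le_exp_of_nonneg hp.le M)
            (Real.exp_pos _).le
  -- tail bound
  have hMfac : (0:ℝ) < (M.factorial : ℝ) := by exact_mod_cast M.factorial_pos
  have tail : ∑' i : ℕ, f (i + M) ≤ Real.exp (-((1 + ε / 2) * x)) := by
    have hgs : Summable (fun i : ℕ => p ^ M / (M.factorial : ℝ) * (1 / 2 : ℝ) ^ i) :=
      (summable_geometric_of_lt_one (by norm_num) (by norm_num)).mul_left _
    have hterm : ∀ i : ℕ, f (i + M) ≤ p ^ M / (M.factorial : ℝ) * (1 / 2 : ℝ) ^ i := by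
      intro i
      have hfac : (M.factorial : ℝ) * ((M : ℝ) + 1) ^ i ≤ ((i + M).factorial : ℝ) := by
        have h := Nat.factorial_mul_pow_le_factorial (m := M) (n := i)
        rw [add_comm i M]
        exact_mod_cast h
      have hfacpos : (0:ℝ) < (M.factorial : ℝ) * ((M : ℝ) + 1) ^ i := by positivity
      calc f (i + M) ≤ p ^ (i + M) / ((i + M).factorial : ℝ) := hf_le _
        _ ≤ p ^ (i + M) / ((M.factorial : ℝ) * ((M : ℝ) + 1) ^ i) := by
            gcongr
        _ = p ^ M / (M.factorial : ℝ) * (p / ((M : ℝ) + 1)) ^ i := by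
            rw [pow_add, div_pow]; field_simp
        _ ≤ p ^ M / (M.factorial : ℝ) * (1 / 2 : ℝ) ^ i := by
            apply mul_le_mul_of_nonneg_left _ (by positivity)
            apply pow_le_pow_left₀ (by positivity)
            rw [div_le_div_iff₀ (by positivity) (by norm_num)]
            linarith
    have hshift : Summable (fun i : ℕ => f (i + M)) := (summable_nat_add_iff M).mpr hsum
    have hMM : (M:ℝ) ^ M ≤ (M.factorial : ℝ) * Real.exp M := by
      have hs := Real.sum_le_exp_of_nonneg (Nat.cast_nonneg M) (M + 1)
      have hsingle : (M:ℝ) ^ M / (M.factorial : ℝ) ≤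
          ∑ i ∈ range (M + 1), (M:ℝ) ^ i / (i.factorial : ℝ) := by
        exact Finset.single_le_sum (f := fun i => (M:ℝ) ^ i / (i.factorial : ℝ))
          (fun i _ => by positivity) (self_mem_range_succ M)
      have := hsingle.trans hs
      rw [div_le_iff₀ hMfac] at this
      linarith [this]
    have hpM : p ^ M / (M.factorial : ℝ) ≤ Real.exp (-((1 + ε / 2) * x + Real.log 2)) := by
      have hMpos : (0:ℝ) < (M:ℝ) := by exact_mod_cast hM0
      have hstep2 : p ^ M / (M.factorial : ℝ) ≤ (p * Real.exp 1 / (M:ℝ)) ^ M := by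
        have h1 : (1:ℝ) / (M.factorial : ℝ) ≤ Real.exp M / (M:ℝ) ^ M := by
          rw [div_le_div_iff₀ hMfac (by positivity)]
          linarith [hMM]
        calc p ^ M / (M.factorial : ℝ) = p ^ M * (1 / (M.factorial : ℝ)) := by ring
          _ ≤ p ^ M * (Real.exp M / (M:ℝ) ^ M) := by
              apply mul_le_mul_of_nonneg_left h1 (by positivity)
          _ = (p * Real.exp 1 / (M:ℝ)) ^ M := by
              rw [div_pow, mul_pow, ← Real.exp_nat_mul, mul_one]; ring
      have hpe : (0:ℝ) < p * Real.exp 1 := by positivity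
      have hlogflip : Real.log ((M:ℝ) / (p * Real.exp 1)) =
          -Real.log (p * Real.exp 1 / (M:ℝ)) := by
        rw [← Real.log_inv, inv_div]
      have hstep3 : (p * Real.exp 1 / (M:ℝ)) ^ M =
          Real.exp (-((M:ℝ) * Real.log ((M:ℝ) / (p * Real.exp 1)))) := by
        rw [hlogflip,
          show -((M:ℝ) * -Real.log (p * Real.exp 1 / (M:ℝ))) =
            ((M:ℝ) * Real.log (p * Real.exp 1 / (M:ℝ))) from by ring,
          Real.exp_nat_mul, Real.exp_log (div_pos hpe hMpos)]
      have hstep4 : (1 + ε / 2) * x + Real.log 2 ≤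
          (M:ℝ) * Real.log ((M:ℝ) / (p * Real.exp 1)) := by
        -- from hc4 and hc5
        have hzpe : Real.exp (b * t) ≤ (a * x / t) / (p * Real.exp 1) := by
          rw [le_div_iff₀ hpe, le_div_iff₀ ht0]
          calc Real.exp (b * t) * (p * Real.exp 1) * t
              = p * Real.exp 1 * t * Real.exp (b * t) := by ring
            _ ≤ a * x := hc4
        have hlogM : b * t ≤ Real.log ((M:ℝ) / (p * Real.exp 1)) := by
          calc b * t = Real.log (Real.exp (b * t)) := (Real.log_exp _).symm
            _ ≤ Real.log ((a * x / t) / (p * Real.exp 1)) :=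
                Real.log_le_log (Real.exp_pos _) hzpe
            _ ≤ Real.log ((M:ℝ) / (p * Real.exp 1)) := by
                apply Real.log_le_log (div_pos hz0 hpe)
                gcongr
        have hbt0 : 0 ≤ b * t := mul_nonneg hb0.le ht0.le
        calc (1 + ε / 2) * x + Real.log 2 ≤ a * b * x := hc5
          _ = (a * x / t) * (b * t) := by field_simp [ht0.ne']
          _ ≤ (M:ℝ) * Real.log ((M:ℝ) / (p * Real.exp 1)) := by
              apply mul_le_mul hzM hlogM hbt0 (by positivity)
      calc p ^ M / (M.factorial : ℝ) ≤ (p * Real.exp 1 / (M:ℝ)) ^ M := hstep2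
        _ = Real.exp (-((M:ℝ) * Real.log ((M:ℝ) / (p * Real.exp 1)))) := hstep3
        _ ≤ Real.exp (-((1 + ε / 2) * x + Real.log 2)) := by
            apply Real.exp_le_exp.mpr; linarith
    calc ∑' i : ℕ, f (i + M) ≤ ∑' i : ℕ, p ^ M / (M.factorial : ℝ) * (1 / 2 : ℝ) ^ i :=
          Summable.tsum_le_tsum hterm hshift hgs
      _ = p ^ M / (M.factorial : ℝ) * 2 := by
          rw [tsum_mul_left, tsum_geometric_of_lt_one (by norm_num) (by norm_num)]
          norm_num
      _ ≤ Real.exp (-((1 + ε / 2) * x + Real.log 2)) * 2 := by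
          apply mul_le_mul_of_nonneg_right hpM (by norm_num)
      _ = Real.exp (-((1 + ε / 2) * x)) := by
          rw [show -((1 + ε / 2) * x + Real.log 2) = -((1 + ε / 2) * x) + -Real.log 2 by ring,
            Real.exp_add, Real.exp_neg (Real.log 2), Real.exp_log (by norm_num : (0:ℝ) < 2)]
          ring
  -- assemble
  calc (n : ℝ) * ∑' i : ℕ, f i
      = Real.exp x * (∑ i ∈ range M, f i + ∑' i : ℕ, f (i + M)) := by
        rw [Summable.sum_add_tsum_nat_add M hsum, hx_def, Real.exp_log hn0]
    _ ≤ Real.exp x * (Real.exp p * Real.exp (-((1 + ε / 2) * x)) +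
          Real.exp (-((1 + ε / 2) * x))) := by
        apply mul_le_mul_of_nonneg_left (add_le_add head tail) (Real.exp_pos _).le
    _ = Real.exp x * Real.exp (-((1 + ε / 2) * x)) * (Real.exp p + 1) := by ring
    _ = (Real.exp p + 1) * Real.exp (-(ε / 2) * x) := by
        rw [← Real.exp_add, show x + -((1 + ε / 2) * x) = -(ε / 2) * x by ring]; ring
    _ = (Real.exp p + 1) * (n : ℝ) ^ (-(ε / 2)) := by
        rw [Real.rpow_def_of_pos hn0, mul_comm (Real.log (n:ℝ)) (-(ε/2)), hx_def]
end

section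
/- Fix reals p > 0 and ε > 0. Then there exist a constant C > 0 and N such that for every n ≥ N with n > p, setting v_n = ⌈e^{1+ε} · (ln n)² / ln(ln(n))⌉, there exists a pooling design g : Fin n → Finset (Fin v_n) whose expected number of unresolved negatives under the Bernoulli distribution with parameter p satisfies Σ_{P ⊆ Fin n} (p/n)^{|P|} · (1 − p/n)^{n−|P|} · |closure(g,P) \ P| ≤ C · n^{−ε/2}. -/
open Finset Filter


lemma descFac_mul_pow_le {k a v : ℕ} (hav : a ≤ v) :
    a.descFactorial k * v ^ k ≤ v.descFactorial k * a ^ k := by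
  rw [Nat.descFactorial_eq_prod_range, Nat.descFactorial_eq_prod_range]
  have e1 : v ^ k = ∏ _i ∈ range k, v := by rw [prod_const, card_range]
  have e2 : a ^ k = ∏ _i ∈ range k, a := by rw [prod_const, card_range]
  rw [e1, e2, ← Finset.prod_mul_distrib, ← Finset.prod_mul_distrib]
  apply Finset.prod_le_prod'
  intro i _
  have h1 : i * a ≤ i * v := Nat.mul_le_mul_left i hav
  calc (a - i) * v ≤ a * v - i * v := by rw [Nat.sub_mul]
    _ ≤ a * v - i * a := by
        rw [Nat.mul_comm a v]
        exact Nat.sub_le_sub_left h1 (v * a)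
    _ ≤ (v - i) * a := by rw [Nat.sub_mul, Nat.mul_comm a v]

lemma choose_ratio {k a v : ℕ} (hav : a ≤ v) :
    (a.choose k : ℝ) * (v : ℝ) ^ k ≤ (v.choose k : ℝ) * (a : ℝ) ^ k := by
  have h := descFac_mul_pow_le (k := k) hav
  have h2 : ((a.descFactorial k * v ^ k : ℕ) : ℝ) ≤ ((v.descFactorial k * a ^ k : ℕ) : ℝ) :=
    Nat.cast_le.mpr h
  rw [Nat.descFactorial_eq_factorial_mul_choose, Nat.descFactorial_eq_factorial_mul_choose] at h2
  push_cast at h2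
  have hk : (0:ℝ) < k.factorial := by positivity
  nlinarith [hk]

lemma choose_bound {v k s m : ℕ} (hk : 0 < k) (hs : s ≤ k * m) (hsv : s ≤ v) :
    (s.choose k : ℝ) ≤ (v.choose k : ℝ) * (((k : ℝ) * m) / v) ^ k := by
  rcases lt_or_ge s k with hlt | hle
  · rw [Nat.choose_eq_zero_of_lt hlt]
    push_cast
    positivity
  · have hkv : k ≤ v := le_trans hle hsv
    have hv0 : 0 < v := lt_of_lt_of_le hk hkv
    have hv0' : (0:ℝ) < v := by exact_mod_cast hv0
    rcases le_or_gt (k * m) v with hkm | hkm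
    · have h1 : (s.choose k : ℝ) ≤ ((k * m).choose k : ℝ) :=
        Nat.cast_le.mpr (Nat.choose_le_choose k hs)
      have h2 := choose_ratio (k := k) (a := k * m) (v := v) hkm
      rw [div_pow, ← mul_div_assoc, le_div_iff₀ (by positivity)]
      calc (s.choose k : ℝ) * (v:ℝ)^k ≤ ((k*m).choose k : ℝ) * (v:ℝ)^k := by
            apply mul_le_mul_of_nonneg_right h1 (by positivity)
        _ ≤ (v.choose k : ℝ) * ((k*m : ℕ) : ℝ)^k := h2
        _ = (v.choose k : ℝ) * ((k:ℝ) * m)^k := by push_cast; ring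
    · have h1 : (s.choose k : ℝ) ≤ (v.choose k : ℝ) :=
        Nat.cast_le.mpr (Nat.choose_le_choose k hsv)
      have h3 : (1:ℝ) ≤ ((k:ℝ) * m) / v := by
        rw [le_div_iff₀ hv0', one_mul]
        exact_mod_cast hkm.le
      calc (s.choose k : ℝ) ≤ (v.choose k : ℝ) := h1
        _ = (v.choose k : ℝ) * 1 := by ring
        _ ≤ (v.choose k : ℝ) * (((k:ℝ)*m)/v)^k := by
            apply mul_le_mul_of_nonneg_left (one_le_pow₀ h3) (by positivity)


lemma count_subsets (v k : ℕ) (T : Finset (Fin v)) :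
    (Finset.univ.filter
      (fun a : {A : Finset (Fin v) // A.card = k} => a.1 ⊆ T)).card = T.card.choose k := by
  rw [← Finset.card_powersetCard]
  apply Finset.card_bij (fun a _ => a.1)
  · intro a ha
    rw [Finset.mem_powersetCard]
    exact ⟨(Finset.mem_filter.mp ha).2, a.2⟩
  · intro a _ b _ h
    exact Subtype.ext h
  · intro B hB
    rw [Finset.mem_powersetCard] at hB
    exact ⟨⟨B, hB.2⟩, Finset.mem_filter.mpr ⟨Finset.mem_univ _, hB.1⟩, rfl⟩

lemma card_beta (v k : ℕ) :
    Fintype.card {A : Finset (Fin v) // A.card = k} = v.choose k := by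
  rw [Fintype.card_subtype]
  have : Finset.univ.filter (fun A : Finset (Fin v) => A.card = k)
      = Finset.univ.powersetCard k := by
    rw [Finset.powersetCard_eq_filter, Finset.powerset_univ]
  rw [this, Finset.card_powersetCard, Finset.card_univ, Fintype.card_fin]

lemma sum_ind_le (n v k : ℕ) (hk : 0 < k) (P : Finset (Fin n)) (x : Fin n) (hx : x ∉ P) :
    ∑ G : Fin n → {A : Finset (Fin v) // A.card = k},
      (if (G x).1 ⊆ P.biUnion (fun z => (G z).1) then (1:ℝ) else 0)
    ≤ (v.choose k : ℝ) ^ n * (((k : ℝ) * P.card) / v) ^ k := by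
  classical
  set β := {A : Finset (Fin v) // A.card = k} with hβ
  set e := Equiv.piSplitAt x (fun _ : Fin n => β) with he
  rw [← Equiv.sum_comp e.symm]
  rw [Fintype.sum_prod_type]
  rw [Finset.sum_comm]
  -- now : ∑ H, ∑ a, ...
  have key : ∀ H : {j : Fin n // j ≠ x} → β,
      ∑ a : β, (if ((e.symm (a, H)) x).1 ⊆ P.biUnion (fun z => ((e.symm (a, H)) z).1)
          then (1:ℝ) else 0)
      ≤ (v.choose k : ℝ) * (((k : ℝ) * P.card) / v) ^ k := by
    intro H
    set F0 : Fin n → Finset (Fin v) :=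
      fun z => if hz : z = x then ∅ else (H ⟨z, hz⟩).1 with hF0
    set T : Finset (Fin v) := P.biUnion F0 with hT
    have hx' : ∀ a : β, (e.symm (a, H)) x = a := by
      intro a
      simp [he, Equiv.piSplitAt_symm_apply]
    have hz' : ∀ a : β, ∀ z ∈ P, ((e.symm (a, H)) z).1 = F0 z := by
      intro a z hz
      have hzx : z ≠ x := fun h => hx (h ▸ hz)
      simp [he, Equiv.piSplitAt_symm_apply, hzx, hF0]
    have hbi : ∀ a : β, P.biUnion (fun z => ((e.symm (a, H)) z).1) = T := by
      intro a
      exact Finset.biUnion_congr rfl (hz' a)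
    calc ∑ a : β, (if ((e.symm (a, H)) x).1 ⊆ P.biUnion (fun z => ((e.symm (a, H)) z).1)
            then (1:ℝ) else 0)
        = ∑ a : β, (if a.1 ⊆ T then (1:ℝ) else 0) := by
          apply Finset.sum_congr rfl
          intro a _
          rw [hbi a, hx' a]
      _ = ((Finset.univ.filter (fun a : β => a.1 ⊆ T)).card : ℝ) := by
          rw [Finset.card_filter]
          push_cast
          rfl
      _ = ((T.card.choose k : ℕ) : ℝ) := by rw [count_subsets]
      _ ≤ (v.choose k : ℝ) * (((k : ℝ) * P.card) / v) ^ k := by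
          apply choose_bound hk
          · calc T.card ≤ ∑ z ∈ P, (F0 z).card := Finset.card_biUnion_le
              _ ≤ ∑ z ∈ P, k := by
                  apply Finset.sum_le_sum
                  intro z hz
                  have hzx : z ≠ x := fun h => hx (h ▸ hz)
                  simp [hF0, hzx, (H ⟨z, hzx⟩).2]
              _ = k * P.card := by rw [Finset.sum_const, smul_eq_mul, mul_comm]
          · calc T.card ≤ Fintype.card (Fin v) := Finset.card_le_univ T
              _ = v := Fintype.card_fin v
  calc ∑ H : {j : Fin n // j ≠ x} → β, ∑ a : β, _ ≤
      ∑ H : {j : Fin n // j ≠ x} → β, (v.choose k : ℝ) * (((k : ℝ) * P.card) / v) ^ k := by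
        apply Finset.sum_le_sum; intro H _; exact key H
    _ = (Fintype.card ({j : Fin n // j ≠ x} → β) : ℝ) * ((v.choose k : ℝ) * (((k : ℝ) * P.card) / v) ^ k) := by
        rw [Finset.sum_const, Finset.card_univ, nsmul_eq_mul]
    _ ≤ (v.choose k : ℝ) ^ n * (((k : ℝ) * P.card) / v) ^ k := by
        have hcard : Fintype.card ({j : Fin n // j ≠ x} → β) = (v.choose k) ^ (n - 1) := by
          rw [Fintype.card_fun, card_beta]
          congr 1
          have := Fintype.card_subtype_compl (fun j : Fin n => j = x)
          simp only [Fintype.card_subtype_eq, Fintype.card_fin] at this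
          exact this
        rw [hcard]
        push_cast
        apply le_of_eq
        have hn : 1 ≤ n := Nat.one_le_iff_ne_zero.mpr (by rintro rfl; exact x.elim0)
        have : (v.choose k : ℝ) ^ (n - 1) * (v.choose k : ℝ) = (v.choose k : ℝ) ^ n := by
          rw [← pow_succ, Nat.sub_add_cancel hn]
        calc ((v.choose k : ℕ) : ℝ) ^ (n-1) * ((v.choose k : ℝ) * (((k : ℝ) * P.card) / v) ^ k)
            = ((v.choose k : ℝ) ^ (n-1) * (v.choose k : ℝ)) * (((k : ℝ) * P.card) / v) ^ k := by ring
          _ = (v.choose k : ℝ) ^ n * (((k : ℝ) * P.card) / v) ^ k := by rw [this]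

lemma subset_sum_pow (n : ℕ) (A B : ℝ) :
    ∑ P : Finset (Fin n), A ^ P.card * B ^ (n - P.card) = (A + B) ^ n := by
  have h := Finset.prod_add (fun _ : Fin n => A) (fun _ : Fin n => B) Finset.univ
  rw [Finset.prod_const, Finset.card_univ, Fintype.card_fin, Finset.powerset_univ] at h
  rw [h]
  apply Finset.sum_congr rfl
  intro P _
  rw [Finset.prod_const, Finset.prod_const, Finset.card_sdiff_of_subset (Finset.subset_univ P),
    Finset.card_univ, Fintype.card_fin]

lemma pow_le_exp_aux (k : ℕ) (lam : ℝ) (hlam : 0 < lam) (m : ℕ) :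
    (m : ℝ) ^ k ≤ (k.factorial / lam ^ k) * Real.exp lam ^ m := by
  have hx : (0:ℝ) ≤ lam * m := by positivity
  have h1 : (lam * m) ^ k / k.factorial ≤ Real.exp (lam * m) := by
    calc (lam * m) ^ k / k.factorial
        ≤ ∑ i ∈ range (k+1), (lam * m) ^ i / i.factorial := by
          exact Finset.single_le_sum (f := fun i => (lam * (m:ℝ)) ^ i / (i.factorial : ℝ))
            (fun i _ => by positivity) (Finset.self_mem_range_succ k)
      _ ≤ Real.exp (lam * m) := Real.sum_le_exp_of_nonneg hx (k+1)
  have h2 : Real.exp (lam * m) = Real.exp lam ^ m := by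
    rw [mul_comm, Real.exp_nat_mul]
  rw [h2] at h1
  have hlk : (0:ℝ) < lam ^ k := by positivity
  have hfk : (0:ℝ) < k.factorial := by positivity
  rw [div_le_iff₀ hfk, mul_pow] at h1
  rw [div_mul_eq_mul_div, le_div_iff₀ hlk]
  calc (m:ℝ)^k * lam^k = lam^k * (m:ℝ)^k := by ring
    _ ≤ Real.exp lam ^ m * k.factorial := h1
    _ = k.factorial * Real.exp lam ^ m := by ring

lemma exists_good (n v k : ℕ) (hk : 0 < k) (hkv : k ≤ v) (p lam : ℝ)
    (hp : 0 ≤ p) (hpn : p ≤ n) (hlam : 0 < lam) :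
    ∃ g : Fin n → Finset (Fin v),
      ∑ P : Finset (Fin n),
        (p / n) ^ P.card * (1 - p / n) ^ (n - P.card) * (((poolClosure g P) \ P).card : ℝ)
      ≤ n * ((k:ℝ)/v)^k * (k.factorial / lam^k) * Real.exp (p * Real.exp lam) := by
  classical
  rcases Nat.eq_zero_or_pos n with rfl | hn
  · refine ⟨fun _ => (∅ : Finset (Fin v)), ?_⟩
    have : ∀ P : Finset (Fin 0),
        ((poolClosure (fun _ : Fin 0 => (∅ : Finset (Fin v))) P \ P).card : ℝ) = 0 := by
      intro P
      simp [poolClosure]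
    simp only [this, mul_zero]
    rw [Finset.sum_const, smul_zero]
    positivity
  have hn0 : (0:ℝ) < n := by exact_mod_cast hn
  set β := {A : Finset (Fin v) // A.card = k} with hβ
  set w : Finset (Fin n) → ℝ := fun P => (p/n)^P.card * (1-p/n)^(n-P.card) with hwdef
  have hpn1 : p / n ≤ 1 := by rw [div_le_one hn0]; exact hpn
  have hpn0 : 0 ≤ p / n := by positivity
  have hw : ∀ P, 0 ≤ w P := by
    intro P
    apply mul_nonneg (pow_nonneg hpn0 _) (pow_nonneg (by linarith) _)
  set Bnd : ℝ := n * ((k:ℝ)/v)^k * (k.factorial / lam^k) * Real.exp (p * Real.exp lam) with hBnd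
  set F : (Fin n → β) → ℝ := fun G =>
    ∑ P : Finset (Fin n), w P * (((poolClosure (fun i => (G i).1) P) \ P).card : ℝ) with hF
  have hFeq : ∀ (G : Fin n → β) (P : Finset (Fin n)),
      (((poolClosure (fun i => (G i).1) P) \ P).card : ℝ)
      = ∑ x : Fin n, (if ((G x).1 ⊆ P.biUnion (fun z => (G z).1) ∧ x ∉ P) then (1:ℝ) else 0) := by
    intro G P
    unfold poolClosure
    rw [Finset.sdiff_eq_filter, Finset.filter_filter, Finset.card_filter]
    push_cast
    apply Finset.sum_congr rfl
    intro x _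
    split <;> simp_all
  -- the averaged bound
  have hmain : ∑ G : Fin n → β, F G ≤ ((v.choose k : ℝ) ^ n) * Bnd := by
    have step1 : ∑ G : Fin n → β, F G
        = ∑ P : Finset (Fin n), ∑ x : Fin n, ∑ G : Fin n → β,
            w P * (if ((G x).1 ⊆ P.biUnion (fun z => (G z).1) ∧ x ∉ P) then (1:ℝ) else 0) := by
      rw [Finset.sum_comm]
      apply Finset.sum_congr rfl
      intro P _
      rw [Finset.sum_comm]
      apply Finset.sum_congr rfl
      intro G _
      rw [hFeq G P, Finset.mul_sum]
    rw [step1]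
    have step2 : ∀ (P : Finset (Fin n)) (x : Fin n),
        ∑ G : Fin n → β,
            w P * (if ((G x).1 ⊆ P.biUnion (fun z => (G z).1) ∧ x ∉ P) then (1:ℝ) else 0)
        ≤ w P * ((v.choose k : ℝ) ^ n * (((k : ℝ) * P.card) / v) ^ k) := by
      intro P x
      rw [← Finset.mul_sum]
      apply mul_le_mul_of_nonneg_left _ (hw P)
      by_cases hx : x ∈ P
      · have : ∀ G : Fin n → β,
            (if ((G x).1 ⊆ P.biUnion (fun z => (G z).1) ∧ x ∉ P) then (1:ℝ) else 0) = 0 := by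
          intro G; simp [hx]
        rw [Finset.sum_congr rfl (fun G _ => this G), Finset.sum_const, smul_zero]
        positivity
      · have : ∀ G : Fin n → β,
            (if ((G x).1 ⊆ P.biUnion (fun z => (G z).1) ∧ x ∉ P) then (1:ℝ) else 0)
            = (if ((G x).1 ⊆ P.biUnion (fun z => (G z).1)) then (1:ℝ) else 0) := by
          intro G; simp [hx]
        rw [Finset.sum_congr rfl (fun G _ => this G)]
        exact sum_ind_le n v k hk P x hx
    calc ∑ P : Finset (Fin n), ∑ x : Fin n, ∑ G : Fin n → β,
            w P * (if ((G x).1 ⊆ P.biUnion (fun z => (G z).1) ∧ x ∉ P) then (1:ℝ) else 0)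
        ≤ ∑ P : Finset (Fin n), ∑ _x : Fin n,
            w P * ((v.choose k : ℝ) ^ n * (((k : ℝ) * P.card) / v) ^ k) := by
          apply Finset.sum_le_sum
          intro P _
          apply Finset.sum_le_sum
          intro x _
          exact step2 P x
      _ = (v.choose k : ℝ) ^ n * (n * ((k:ℝ)/v)^k) *
            ∑ P : Finset (Fin n), w P * ((P.card : ℝ))^k := by
          rw [Finset.mul_sum]
          apply Finset.sum_congr rfl
          intro P _
          rw [Finset.sum_const, Finset.card_univ, Fintype.card_fin, nsmul_eq_mul]
          have : (((k : ℝ) * P.card) / v) ^ k = ((k:ℝ)/v)^k * ((P.card : ℝ))^k := by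
            rw [← mul_pow]; congr 1; ring
          rw [this]; ring
      _ ≤ (v.choose k : ℝ) ^ n * (n * ((k:ℝ)/v)^k) *
            ((k.factorial / lam^k) * Real.exp (p * Real.exp lam)) := by
          apply mul_le_mul_of_nonneg_left _ (by positivity)
          calc ∑ P : Finset (Fin n), w P * ((P.card : ℝ))^k
              ≤ ∑ P : Finset (Fin n),
                  (k.factorial / lam^k) *
                    ((p/n * Real.exp lam)^P.card * (1-p/n)^(n-P.card)) := by
                apply Finset.sum_le_sum
                intro P _
                calc w P * ((P.card : ℝ))^k
                    ≤ w P * ((k.factorial / lam^k) * Real.exp lam ^ P.card) :=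
                      mul_le_mul_of_nonneg_left (pow_le_exp_aux k lam hlam P.card) (hw P)
                  _ = (k.factorial / lam^k) *
                        ((p/n * Real.exp lam)^P.card * (1-p/n)^(n-P.card)) := by
                      rw [hwdef]; simp only []; rw [mul_pow]; ring
            _ = (k.factorial / lam^k) * ((p/n * Real.exp lam) + (1 - p/n))^n := by
                rw [← Finset.mul_sum, subset_sum_pow]
            _ ≤ (k.factorial / lam^k) * Real.exp (p * Real.exp lam) := by
                apply mul_le_mul_of_nonneg_left _ (by positivity)
                have hbase0 : (0:ℝ) ≤ (p/n * Real.exp lam) + (1 - p/n) := by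
                  have : (0:ℝ) ≤ p/n * Real.exp lam := by positivity
                  linarith
                have hbase : (p/n * Real.exp lam) + (1 - p/n)
                    ≤ Real.exp (p/n * (Real.exp lam - 1)) := by
                  have := Real.add_one_le_exp (p/n * (Real.exp lam - 1))
                  nlinarith []
                calc ((p/n * Real.exp lam) + (1 - p/n))^n
                    ≤ (Real.exp (p/n * (Real.exp lam - 1)))^n :=
                      pow_le_pow_left₀ hbase0 hbase n
                  _ = Real.exp ((n:ℝ) * (p/n * (Real.exp lam - 1))) := by
                      rw [Real.exp_nat_mul]
                  _ ≤ Real.exp (p * Real.exp lam) := by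
                      apply Real.exp_le_exp.mpr
                      have hne : (n:ℝ) ≠ 0 := ne_of_gt hn0
                      rw [← mul_assoc, mul_div_cancel₀ p hne]
                      nlinarith [Real.exp_pos lam, hp]
      _ = (v.choose k : ℝ) ^ n * Bnd := by rw [hBnd]; ring
  -- extraction
  have hne : Nonempty β := by
    obtain ⟨A, -, hA⟩ := Finset.exists_subset_card_eq
      (show k ≤ (Finset.univ : Finset (Fin v)).card by
        rwa [Finset.card_univ, Fintype.card_fin])
    exact ⟨⟨A, hA⟩⟩
  by_contra hcon
  push_neg at hcon
  have hlt : ((v.choose k : ℝ) ^ n) * Bnd < ∑ G : Fin n → β, F G := by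
    have h1 : ∑ _G : Fin n → β, Bnd < ∑ G : Fin n → β, F G := by
      apply Finset.sum_lt_sum_of_nonempty Finset.univ_nonempty
      intro G _
      exact hcon (fun i => (G i).1)
    calc ((v.choose k : ℝ) ^ n) * Bnd
        = (Fintype.card (Fin n → β) : ℝ) * Bnd := by
          rw [Fintype.card_fun, card_beta, Fintype.card_fin]
          push_cast
          ring
      _ = ∑ _G : Fin n → β, Bnd := by
          rw [Finset.sum_const, Finset.card_univ, nsmul_eq_mul]
      _ < ∑ G : Fin n → β, F G := h1
  exact absurd hmain (not_le.mpr hlt)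

lemma endgame_coeff (c θ ε L : ℝ) (hL : 0 ≤ L) (hc_lb : 1 + ε/2 + ε^2/8 ≤ c)
    (hcθ : c*θ = ε^2/16) :
    L + c*L*(θ-1) + ε^2/16*L ≤ -(ε/2)*L := by
  nlinarith [mul_nonneg hL (sub_nonneg.mpr hc_lb)]

lemma endgame_p (p L W ε : ℝ) (hL : 0 ≤ L) (hW : 0 < W) (h : 16*p ≤ ε^2*W^2) :
    p * (L/W^2) ≤ ε^2/16*L := by
  have h2 : p*(L/W^2) = p*L/W^2 := by ring
  rw [h2, div_le_iff₀ (by positivity)]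
  nlinarith [mul_nonneg (sub_nonneg.mpr h) hL]

lemma sqrt_bound (x W : ℝ) (hx : 0 ≤ x) (h : Real.sqrt x ≤ W) : x ≤ W^2 := by
  nlinarith [Real.sq_sqrt hx, Real.sqrt_nonneg x]

set_option maxHeartbeats 2000000 in
theorem good_two_stage_design_exists
    (p ε : ℝ) (hp : 0 < p) (hε : 0 < ε) :
    ∃ C > (0 : ℝ), ∃ N : ℕ, ∀ n : ℕ, N ≤ n → p < n →
      ∃ g : Fin n →
          Finset (Fin ⌈Real.exp (1 + ε) * (Real.log n) ^ 2 / Real.log (Real.log n)⌉₊),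
        ∑ P : Finset (Fin n),
            (p / n) ^ P.card * (1 - p / n) ^ (n - P.card) *
              (((poolClosure g P) \ P).card : ℝ) ≤
          C * (n : ℝ) ^ (-(ε / 2)) := by
  refine ⟨1, one_pos, ?_⟩
  set c := Real.exp (ε/2) with hc
  have hcpos : 0 < c := Real.exp_pos _
  set θ := ε^2/(16*c) with hθdef
  have hθpos : 0 < θ := by positivity
  have hc_lb : 1 + ε/2 + ε^2/8 ≤ c := by
    have h := Real.sum_le_exp_of_nonneg (le_of_lt (half_pos hε)) 3
    rw [Finset.sum_range_succ, Finset.sum_range_succ, Finset.sum_range_one] at h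
    norm_num at h
    rw [hc]
    nlinarith [h]
  have hc1 : 1 ≤ c := by nlinarith [sq_nonneg ε]
  have hcθ : c * θ = ε^2/16 := by
    rw [hθdef]; field_simp
  -- tendsto facts
  have hLt : Tendsto (fun n : ℕ => Real.log n) atTop atTop :=
    Real.tendsto_log_atTop.comp tendsto_natCast_atTop_atTop
  have hWt : Tendsto (fun n : ℕ => Real.log (Real.log n)) atTop atTop :=
    Real.tendsto_log_atTop.comp hLt
  have hdiv : Tendsto (fun x : ℝ => Real.log x / x) atTop (nhds 0) :=
    Real.isLittleO_log_id_atTop.tendsto_div_nhds_zero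
  set s₀ : ℝ := min ((1 - Real.exp (-(θ/2)))/2) (4⁻¹) with hs₀
  have hs₀pos : 0 < s₀ := by
    apply lt_min _ (by norm_num)
    have : Real.exp (-(θ/2)) < 1 := Real.exp_lt_one_iff.mpr (by linarith)
    linarith
  set q : ℝ := min 1 (Real.exp (1+ε)/(c+1)) with hq
  have hqpos : 0 < q := lt_min one_pos (by positivity)
  have hE1 : ∀ᶠ n : ℕ in atTop, 1 ≤ Real.log n := hLt.eventually_ge_atTop 1
  have hE2 : ∀ᶠ n : ℕ in atTop, Real.sqrt (16*p/ε^2) ≤ Real.log (Real.log n) :=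
    hWt.eventually_ge_atTop _
  have hE7 : ∀ᶠ n : ℕ in atTop, 1 ≤ Real.log (Real.log n) := hWt.eventually_ge_atTop 1
  have hE3 : ∀ᶠ n : ℕ in atTop,
      Real.log (Real.log (Real.log n)) / Real.log (Real.log n) ≤ s₀ :=
    ((hdiv.comp hWt).eventually_lt_const hs₀pos).mono (fun n h => le_of_lt h)
  have hE4 : ∀ᶠ n : ℕ in atTop, 1/(c*(Real.exp (θ/4) - 1)) ≤ Real.log n :=
    hLt.eventually_ge_atTop _
  have hE5 : ∀ᶠ n : ℕ in atTop, Real.log (Real.log n) / Real.log n ≤ q :=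
    ((hdiv.comp hLt).eventually_lt_const hqpos).mono (fun n h => le_of_lt h)
  have hE6 : ∀ᶠ n : ℕ in atTop, 1 ≤ n := eventually_ge_atTop 1
  have hall := (((((hE1.and hE2).and hE7).and hE3).and hE4).and hE5).and hE6
  obtain ⟨N, hN⟩ := eventually_atTop.mp hall
  refine ⟨N, ?_⟩
  intro n hn hpn'
  obtain ⟨⟨⟨⟨⟨⟨h1, h2⟩, h7⟩, h3⟩, h4⟩, h5⟩, h6⟩ := hN n hn
  set L := Real.log (n : ℝ) with hL
  set W := Real.log L with hW
  set lam := W - 2*Real.log W with hlam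
  set v := ⌈Real.exp (1 + ε) * L ^ 2 / W⌉₊ with hv
  set k := ⌈c * L⌉₊ with hk
  -- basic positivity
  have hL0 : 0 < L := lt_of_lt_of_le one_pos h1
  have hW0 : 0 < W := lt_of_lt_of_le one_pos h7
  have hlogW0 : 0 ≤ Real.log W := Real.log_nonneg h7
  have hsle : Real.log W ≤ s₀ * W := by
    rw [div_le_iff₀ hW0] at h3; exact h3
  have hW4 : Real.log W ≤ W/4 := by
    have : s₀ ≤ 4⁻¹ := min_le_right _ _
    nlinarith
  have hlam_lb : W/2 ≤ lam := by rw [hlam]; linarith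
  have hlam_pos : 0 < lam := by linarith
  have hWlam : W ≤ lam * Real.exp (θ/2) := by
    have hs1 : s₀ ≤ (1 - Real.exp (-(θ/2)))/2 := min_le_left _ _
    have h2s : 2 * Real.log W ≤ W - Real.exp (-(θ/2)) * W := by
      nlinarith [hsle, hs1, hW0.le]
    have hlam_ge : Real.exp (-(θ/2)) * W ≤ lam := by
      rw [hlam]; linarith
    have hexp : Real.exp (-(θ/2)) * Real.exp (θ/2) = 1 := by
      rw [← Real.exp_add]; norm_num
    calc W = W * (Real.exp (-(θ/2)) * Real.exp (θ/2)) := by rw [hexp, mul_one]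
      _ = (Real.exp (-(θ/2)) * W) * Real.exp (θ/2) := by ring
      _ ≤ lam * Real.exp (θ/2) :=
          mul_le_mul_of_nonneg_right hlam_ge (Real.exp_pos _).le
  -- k bounds
  have hk1 : 0 < k := Nat.ceil_pos.mpr (by positivity)
  have hkc : (k:ℝ) ≤ c*L + 1 := le_of_lt (Nat.ceil_lt_add_one (by positivity))
  have hkc' : c*L ≤ (k:ℝ) := Nat.le_ceil _
  have hvlb : Real.exp (1+ε) * L^2 / W ≤ (v:ℝ) := Nat.le_ceil _
  have hDpos : 0 < Real.exp (1+ε) * L^2 / W := by positivity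
  have hvpos : (0:ℝ) < v := lt_of_lt_of_le hDpos hvlb
  -- k ≤ v
  have hkv : k ≤ v := by
    have hq2 : q ≤ Real.exp (1+ε)/(c+1) := min_le_right _ _
    have hq1 : q ≤ 1 := min_le_left _ _
    have hWL : W ≤ q * L := by rw [div_le_iff₀ hL0] at h5; exact h5
    have hWqL : 0 < q * L := by positivity
    have step : (c+1)*L ≤ Real.exp (1+ε) * L^2 / W := by
      rw [le_div_iff₀ hW0]
      have e1 : (c+1)*L*W ≤ (c+1)*L*(q*L) := by
        apply mul_le_mul_of_nonneg_left hWL (by positivity)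
      have e2 : (c+1)*q ≤ Real.exp (1+ε) := by
        rw [hq] at hq2 ⊢
        have := min_le_right 1 (Real.exp (1+ε)/(c+1))
        calc (c+1) * min 1 (Real.exp (1+ε)/(c+1)) ≤ (c+1) * (Real.exp (1+ε)/(c+1)) := by
              apply mul_le_mul_of_nonneg_left this (by positivity)
          _ = Real.exp (1+ε) := by field_simp
      have e3 : (c+1)*q*L^2 ≤ Real.exp (1+ε) * L^2 :=
        mul_le_mul_of_nonneg_right e2 (sq_nonneg L)
      calc (c+1)*L*W ≤ (c+1)*L*(q*L) := e1
        _ = (c+1)*q*L^2 := by ring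
        _ ≤ Real.exp (1+ε) * L^2 := e3
    have : (k:ℝ) ≤ (v:ℝ) := by
      calc (k:ℝ) ≤ c*L + 1 := hkc
        _ ≤ c*L + L := by linarith
        _ = (c+1)*L := by ring
        _ ≤ Real.exp (1+ε) * L^2 / W := step
        _ ≤ (v:ℝ) := hvlb
    exact_mod_cast this
  -- the X bound
  have hnum : (c*L+1)^2 ≤ c^2*L^2*Real.exp (θ/2) := by
    have hθ4 : (0:ℝ) < Real.exp (θ/4) - 1 := by
      have := Real.add_one_le_exp (θ/4); nlinarith
    have h4' : 1 ≤ L * (c*(Real.exp (θ/4) - 1)) := by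
      rw [div_le_iff₀ (by positivity)] at h4
      linarith [h4]
    have hkL : c*L + 1 ≤ c*L*Real.exp (θ/4) := by nlinarith
    have hsq : Real.exp (θ/4) * Real.exp (θ/4) = Real.exp (θ/2) := by
      rw [← Real.exp_add]; congr 1; ring
    calc (c*L+1)^2 = (c*L+1)*(c*L+1) := sq (c*L+1)
      _ ≤ (c*L*Real.exp (θ/4))*(c*L*Real.exp (θ/4)) :=
          mul_self_le_mul_self (by positivity) hkL
      _ = c^2*L^2*(Real.exp (θ/4)*Real.exp (θ/4)) := by ring
      _ = c^2*L^2*Real.exp (θ/2) := by rw [hsq]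
  have hXb : (k:ℝ)^2/((v:ℝ)*lam) ≤ Real.exp (θ - 1) := by
    have hd2pos : 0 < (Real.exp (1+ε) * L^2 / W) * lam := by positivity
    have step1 : (k:ℝ)^2/((v:ℝ)*lam) ≤ (c*L+1)^2 / ((Real.exp (1+ε) * L^2 / W) * lam) := by
      apply div_le_div₀ (by positivity) _ hd2pos _
      · nlinarith [hkc, hkc', hcpos, hL0]
      · apply mul_le_mul_of_nonneg_right hvlb (le_of_lt hlam_pos)
    have hexpid : c^2 * Real.exp (θ/2) * Real.exp (θ/2) = Real.exp (θ-1) * Real.exp (1+ε) := by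
      rw [hc, sq, ← Real.exp_add, ← Real.exp_add, ← Real.exp_add, ← Real.exp_add]
      congr 1; ring
    have step2 : (c*L+1)^2 / ((Real.exp (1+ε) * L^2 / W) * lam) ≤ Real.exp (θ-1) := by
      rw [div_le_iff₀ hd2pos]
      have key : (c*L+1)^2 * W ≤ Real.exp (θ-1) * Real.exp (1+ε) * L^2 * lam := by
        calc (c*L+1)^2 * W ≤ (c^2*L^2*Real.exp (θ/2)) * (lam * Real.exp (θ/2)) := by
              apply mul_le_mul hnum hWlam (le_of_lt hW0) (by positivity)
          _ = (c^2 * Real.exp (θ/2) * Real.exp (θ/2)) * (L^2 * lam) := by ring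
          _ = Real.exp (θ-1) * Real.exp (1+ε) * L^2 * lam := by rw [hexpid]; ring
      have hre : Real.exp (θ-1) * ((Real.exp (1+ε) * L^2 / W) * lam)
          = (Real.exp (θ-1) * Real.exp (1+ε) * L^2 * lam) / W := by
        field_simp
      rw [hre, le_div_iff₀ hW0]
      exact key
    exact le_trans step1 step2
  -- apply the averaging lemma
  obtain ⟨g, hg⟩ := exists_good n v k hk1 hkv p lam hp.le hpn'.le hlam_pos
  refine ⟨g, le_trans hg ?_⟩
  rw [one_mul]
  have hn0 : (0:ℝ) < n := by exact_mod_cast h6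
  have hnexp : (n:ℝ) = Real.exp L := (Real.exp_log hn0).symm
  have hθ1 : θ ≤ 1/2 := by
    rw [hθdef, div_le_iff₀ (by positivity)]
    nlinarith [hc_lb, sq_nonneg ε]
  have hfact : (k.factorial : ℝ) ≤ (k:ℝ)^k := by exact_mod_cast Nat.factorial_le_pow k
  have hlamk : (0:ℝ) < lam^k := by positivity
  have hBB : ((k:ℝ)/v)^k * ((k.factorial:ℝ)/lam^k) ≤ ((k:ℝ)^2/((v:ℝ)*lam))^k := by
    have he : ((k:ℝ)/v)^k * ((k:ℝ)^k / lam^k) = ((k:ℝ)^2/((v:ℝ)*lam))^k := by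
      rw [div_pow, div_mul_div_comm, div_pow, mul_pow]
      congr 1
      rw [← pow_mul, two_mul, pow_add]
    rw [← he]
    gcongr
  have hstep2 : ((k:ℝ)^2/((v:ℝ)*lam))^k ≤ Real.exp (c*L*(θ-1)) := by
    calc ((k:ℝ)^2/((v:ℝ)*lam))^k ≤ (Real.exp (θ-1))^k := by
          apply pow_le_pow_left₀ (by positivity) hXb
      _ = Real.exp ((k:ℝ)*(θ-1)) := by rw [Real.exp_nat_mul]
      _ ≤ Real.exp (c*L*(θ-1)) := by
          apply Real.exp_le_exp.mpr
          apply mul_le_mul_of_nonpos_right hkc' (by linarith)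
  have hexplam : Real.exp lam = L / W^2 := by
    have e1 : Real.exp W = L := by rw [hW]; exact Real.exp_log hL0
    have e2 : Real.exp (Real.log W) = W := Real.exp_log hW0
    rw [hlam, Real.exp_sub, e1, two_mul, Real.exp_add, e2, sq]
  have hstep3 : Real.exp (p * Real.exp lam) ≤ Real.exp (ε^2/16 * L) := by
    apply Real.exp_le_exp.mpr
    rw [hexplam]
    have hW2 : 16*p/ε^2 ≤ W^2 := sqrt_bound _ _ (by positivity) h2
    have hW2' : 16*p ≤ ε^2*W^2 := by
      rw [div_le_iff₀ (by positivity)] at hW2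
      linarith
    exact endgame_p p L W ε hL0.le hW0 hW2'
  calc (n:ℝ) * ((k:ℝ)/v)^k * ((k.factorial:ℝ) / lam^k) * Real.exp (p * Real.exp lam)
      = (n:ℝ) * (((k:ℝ)/v)^k * ((k.factorial:ℝ) / lam^k)) * Real.exp (p * Real.exp lam) := by
        ring
    _ ≤ Real.exp L * Real.exp (c*L*(θ-1)) * Real.exp (ε^2/16 * L) := by
        apply mul_le_mul _ hstep3 (Real.exp_pos _).le (by positivity)
        rw [hnexp]
        exact mul_le_mul_of_nonneg_left (le_trans hBB hstep2) (Real.exp_pos _).le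
    _ = Real.exp (L + c*L*(θ-1) + ε^2/16 * L) := by
        rw [← Real.exp_add, ← Real.exp_add]
    _ ≤ Real.exp (Real.log (n:ℝ) * (-(ε/2))) := by
        apply Real.exp_le_exp.mpr
        calc L + c*L*(θ-1) + ε^2/16 * L ≤ -(ε/2)*L :=
              endgame_coeff c θ ε L hL0.le hc_lb hcθ
          _ = Real.log (n:ℝ) * (-(ε/2)) := by rw [← hL]; ring
    _ = (n:ℝ)^(-(ε/2)) := by rw [← Real.rpow_def_of_pos hn0]
end

section
/- Let k be a natural number, q ∈ [0,1] a real, and μ a probability mass function on Finset (Fin k) with the following property: for every i : Fin k and every U ⊆ {j : Fin k | j < i}, if μ{E : E ∩ {j | j < i} = U} > 0, then μ{E : i ∈ E and E ∩ {j | j < i} = U} ≥ q · μ{E : E ∩ {j | j < i} = U}. Let B be the probability mass function on Finset (Fin k) given by B(E) = q^{|E|} · (1−q)^{k−|E|} (each element included independently with probability q). Then for every upward-closed family F of subsets of Fin k (i.e., U ∈ F and U ⊆ V implies V ∈ F), μ(F) ≥ B(F). -/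
open Finset

namespace SDAux

/-- The set of indices below `m`. -/
def ltm (k m : ℕ) : Finset (Fin k) := Finset.univ.filter (fun j => (j : ℕ) < m)

/-- Hybrid weight: first `m` coordinates follow `μ`, rest are Bernoulli(q). -/
noncomputable def w (k : ℕ) (q : ℝ) (μ : Finset (Fin k) → ℝ) (m : ℕ)
    (E : Finset (Fin k)) : ℝ :=
  (∑ E' ∈ Finset.univ.filter (fun E' : Finset (Fin k) => E' ∩ ltm k m = E ∩ ltm k m), μ E')
    * (q ^ (E \ ltm k m).card * (1 - q) ^ (k - m - (E \ ltm k m).card))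

lemma ltm_zero (k : ℕ) : ltm k 0 = ∅ := by
  simp [ltm]

lemma ltm_self (k : ℕ) : ltm k k = Finset.univ := by
  simp only [ltm]
  exact Finset.filter_true_of_mem (fun j _ => j.isLt)

lemma card_sdiff_ltm_le (k m : ℕ) (hm : m ≤ k) (E : Finset (Fin k)) :
    (E \ ltm k m).card ≤ k - m := by
  have h1 : m ≤ (ltm k m).card := by
    have : (Finset.univ : Finset (Fin m)).card ≤ (ltm k m).card := by
      apply Finset.card_le_card_of_injOn (fun j => ⟨(j : ℕ), lt_of_lt_of_le j.isLt hm⟩)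
      · intro j _
        simp [ltm]
      · intro a _ b _ hab
        exact Fin.ext (by simpa using congrArg Fin.val hab)
    simpa using this
  have h2 : (E \ ltm k m).card + (ltm k m).card ≤ k := by
    have hd : Disjoint (E \ ltm k m) (ltm k m) := Finset.sdiff_disjoint
    calc (E \ ltm k m).card + (ltm k m).card = ((E \ ltm k m) ∪ ltm k m).card :=
          (Finset.card_union_of_disjoint hd).symm
      _ ≤ (Finset.univ : Finset (Fin k)).card := Finset.card_le_card (Finset.subset_univ _)
      _ = k := by simp
  omega

lemma w_zero (k : ℕ) (q : ℝ) (μ : Finset (Fin k) → ℝ)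
    (hμ1 : ∑ E : Finset (Fin k), μ E = 1) (E : Finset (Fin k)) :
    w k q μ 0 E = q ^ E.card * (1 - q) ^ (k - E.card) := by
  simp [w, ltm_zero, hμ1]

lemma w_self (k : ℕ) (q : ℝ) (μ : Finset (Fin k) → ℝ) (E : Finset (Fin k)) :
    w k q μ k E = μ E := by
  have h : E \ (Finset.univ : Finset (Fin k)) = ∅ :=
    Finset.sdiff_eq_empty_iff_subset.2 (Finset.subset_univ E)
  simp [w, ltm_self, Finset.filter_eq', h]


lemma aux1 {α : Type*} [DecidableEq α] {E L U : Finset α} {i : α}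
    (hiL : i ∉ L) (hiU : i ∉ U) :
    E ∩ insert i L = insert i U ↔ i ∈ E ∧ E ∩ L = U := by
  constructor
  · intro h
    have hiE : i ∈ E := by
      have : i ∈ E ∩ insert i L := h ▸ Finset.mem_insert_self i U
      exact (Finset.mem_inter.1 this).1
    refine ⟨hiE, ?_⟩
    ext a
    have ha := Finset.ext_iff.1 h a
    simp only [Finset.mem_inter, Finset.mem_insert] at ha ⊢
    constructor
    · rintro ⟨haE, haL⟩
      rcases ha.1 ⟨haE, Or.inr haL⟩ with rfl | h2
      · exact absurd haL hiL
      · exact h2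
    · intro haU
      rcases ha.2 (Or.inr haU) with ⟨haE, rfl | haL⟩
      · exact absurd haU hiU
      · exact ⟨haE, haL⟩
  · rintro ⟨hiE, rfl⟩
    ext a
    simp only [Finset.mem_inter, Finset.mem_insert]
    constructor
    · rintro ⟨haE, rfl | haL⟩
      · exact Or.inl rfl
      · exact Or.inr ⟨haE, haL⟩
    · rintro (rfl | ⟨haE, haL⟩)
      · exact ⟨hiE, Or.inl rfl⟩
      · exact ⟨haE, Or.inr haL⟩

lemma aux2 {α : Type*} [DecidableEq α] {E L U : Finset α} {i : α}
    (hiL : i ∉ L) (hiU : i ∉ U) :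
    E ∩ insert i L = U ↔ i ∉ E ∧ E ∩ L = U := by
  constructor
  · intro h
    have hiE : i ∉ E := fun hiE =>
      hiU (h ▸ Finset.mem_inter.2 ⟨hiE, Finset.mem_insert_self i L⟩)
    refine ⟨hiE, ?_⟩
    ext a
    have ha := Finset.ext_iff.1 h a
    simp only [Finset.mem_inter, Finset.mem_insert] at ha ⊢
    constructor
    · rintro ⟨haE, haL⟩
      exact ha.1 ⟨haE, Or.inr haL⟩
    · intro haU
      rcases ha.2 haU with ⟨haE, rfl | haL⟩
      · exact absurd haE hiE
      · exact ⟨haE, haL⟩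
  · rintro ⟨hiE, rfl⟩
    ext a
    simp only [Finset.mem_inter, Finset.mem_insert]
    constructor
    · rintro ⟨haE, rfl | haL⟩
      · exact absurd haE hiE
      · exact ⟨haE, haL⟩
    · rintro ⟨haE, haL⟩
      exact ⟨haE, Or.inr haL⟩

lemma aux3 {α : Type*} [DecidableEq α] {E L : Finset α} {i : α}
    (hiL : i ∉ L) (hiE : i ∈ E) :
    E \ L = insert i (E \ insert i L) := by
  ext a
  by_cases hai : a = i
  · subst hai; simp [hiE, hiL]
  · simp [Finset.mem_sdiff, Finset.mem_insert, hai]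

lemma aux4 {α : Type*} [DecidableEq α] {E L : Finset α} {i : α}
    (hiE : i ∉ E) :
    E \ L = E \ insert i L := by
  ext a
  by_cases hai : a = i
  · subst hai; simp [hiE]
  · simp [hai]

lemma step (k : ℕ) (q : ℝ) (hq0 : 0 ≤ q) (hq1 : q ≤ 1)
    (μ : Finset (Fin k) → ℝ)
    (hμ0 : ∀ E, 0 ≤ μ E)
    (hcond : ∀ i : Fin k, ∀ U : Finset (Fin k),
      U ⊆ Finset.univ.filter (fun j : Fin k => j < i) →
      0 < (∑ E ∈ Finset.univ.filter (fun E : Finset (Fin k) =>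
            E ∩ Finset.univ.filter (fun j : Fin k => j < i) = U), μ E) →
      (∑ E ∈ Finset.univ.filter (fun E : Finset (Fin k) =>
            i ∈ E ∧ E ∩ Finset.univ.filter (fun j : Fin k => j < i) = U), μ E) ≥
        q * ∑ E ∈ Finset.univ.filter (fun E : Finset (Fin k) =>
            E ∩ Finset.univ.filter (fun j : Fin k => j < i) = U), μ E)
    (F : Finset (Finset (Fin k)))
    (hF : ∀ U ∈ F, ∀ V : Finset (Fin k), U ⊆ V → V ∈ F)
    (m : ℕ) (hm : m < k) :
    ∑ E ∈ F, w k q μ m E ≤ ∑ E ∈ F, w k q μ (m + 1) E := by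
  have hm1 : m + 1 ≤ k := hm
  set i : Fin k := ⟨m, hm⟩ with hidef
  have hival : (i : ℕ) = m := rfl
  have hlt : (Finset.univ.filter (fun j : Fin k => j < i)) = ltm k m := by
    ext j; simp [ltm, Fin.lt_def, hival]
  have hinotlt : i ∉ ltm k m := by simp [ltm, hival]
  have hiin : i ∈ ltm k (m + 1) := by simp [ltm, hival]
  have hins : ltm k (m + 1) = insert i (ltm k m) := by
    ext j
    simp only [ltm, Finset.mem_filter, Finset.mem_univ, true_and, Finset.mem_insert,
      Fin.ext_iff, hival]
    omega
  have hmap : ∀ E ∈ F, E ∩ ltm k m ∈ (ltm k m).powerset :=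
    fun E _ => Finset.mem_powerset.2 Finset.inter_subset_right
  rw [← Finset.sum_fiberwise_of_maps_to hmap (w k q μ m),
      ← Finset.sum_fiberwise_of_maps_to hmap (w k q μ (m + 1))]
  apply Finset.sum_le_sum
  intro U hU
  have hUsub : U ⊆ ltm k m := Finset.mem_powerset.1 hU
  have hiU : i ∉ U := fun h => hinotlt (hUsub h)
  set t : Finset (Fin k) → ℝ :=
    fun E => q ^ (E \ ltm k (m + 1)).card *
      (1 - q) ^ (k - (m + 1) - (E \ ltm k (m + 1)).card) with htdef
  have ht : ∀ E, 0 ≤ t E :=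
    fun E => mul_nonneg (pow_nonneg hq0 _) (pow_nonneg (by linarith) _)
  set Fib := F.filter (fun E => E ∩ ltm k m = U) with hFibdef
  set A1 := Fib.filter (fun E => i ∈ E) with hA1def
  set A0 := Fib.filter (fun E => i ∉ E) with hA0def
  set P := ∑ E' ∈ Finset.univ.filter (fun E' : Finset (Fin k) => E' ∩ ltm k m = U), μ E'
    with hPdef
  set Q := ∑ E' ∈ Finset.univ.filter
      (fun E' : Finset (Fin k) => E' ∩ ltm k (m + 1) = insert i U), μ E' with hQdef
  set P0 := ∑ E' ∈ Finset.univ.filter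
      (fun E' : Finset (Fin k) => E' ∩ ltm k (m + 1) = U), μ E' with hP0def
  -- pieces of membership
  have hmemA1 : ∀ E ∈ A1, E ∈ F ∧ E ∩ ltm k m = U ∧ i ∈ E := by
    intro E hE
    have h1 := Finset.mem_filter.1 hE
    have h2 := Finset.mem_filter.1 h1.1
    exact ⟨h2.1, h2.2, h1.2⟩
  have hmemA0 : ∀ E ∈ A0, E ∈ F ∧ E ∩ ltm k m = U ∧ i ∉ E := by
    intro E hE
    have h1 := Finset.mem_filter.1 hE
    have h2 := Finset.mem_filter.1 h1.1
    exact ⟨h2.1, h2.2, h1.2⟩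
  -- weight computations
  have hA1m : ∀ E ∈ A1, w k q μ m E = (P * q) * t E := by
    intro E hE
    obtain ⟨hEF, hEU, hiE⟩ := hmemA1 E hE
    have h3 : E \ ltm k m = insert i (E \ ltm k (m + 1)) := by
      rw [hins]; exact aux3 hinotlt hiE
    have hnotmem : i ∉ E \ ltm k (m + 1) := fun h => (Finset.mem_sdiff.1 h).2 hiin
    have hc : (E \ ltm k m).card = (E \ ltm k (m + 1)).card + 1 := by
      rw [h3, Finset.card_insert_of_notMem hnotmem]
    have hexp : k - m - ((E \ ltm k (m + 1)).card + 1)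
        = k - (m + 1) - (E \ ltm k (m + 1)).card := by omega
    simp only [w, hEU, hc, hexp, htdef, ← hPdef]
    ring
  have hA0m : ∀ E ∈ A0, w k q μ m E = (P * (1 - q)) * t E := by
    intro E hE
    obtain ⟨hEF, hEU, hiE⟩ := hmemA0 E hE
    have h3 : E \ ltm k m = E \ ltm k (m + 1) := by
      rw [hins]; exact aux4 hiE
    have hcle : (E \ ltm k (m + 1)).card ≤ k - (m + 1) :=
      card_sdiff_ltm_le k (m + 1) hm1 E
    have hexp : k - m - (E \ ltm k (m + 1)).card
        = (k - (m + 1) - (E \ ltm k (m + 1)).card) + 1 := by omega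
    simp only [w, hEU, h3, hexp, pow_succ, htdef, ← hPdef]
    ring
  have hA1s : ∀ E ∈ A1, w k q μ (m + 1) E = Q * t E := by
    intro E hE
    obtain ⟨hEF, hEU, hiE⟩ := hmemA1 E hE
    have hE1 : E ∩ ltm k (m + 1) = insert i U := by
      rw [hins]; exact (aux1 hinotlt hiU).2 ⟨hiE, hEU⟩
    simp only [w, hE1, htdef, ← hQdef]
  have hA0s : ∀ E ∈ A0, w k q μ (m + 1) E = P0 * t E := by
    intro E hE
    obtain ⟨hEF, hEU, hiE⟩ := hmemA0 E hE
    have hE1 : E ∩ ltm k (m + 1) = U := by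
      rw [hins]; exact (aux2 hinotlt hiU).2 ⟨hiE, hEU⟩
    simp only [w, hE1, htdef, ← hP0def]
  -- P splits as Q + P0
  have hQset : (Finset.univ.filter (fun E' : Finset (Fin k) =>
      i ∈ E' ∧ E' ∩ ltm k m = U)) = Finset.univ.filter
      (fun E' : Finset (Fin k) => E' ∩ ltm k (m + 1) = insert i U) := by
    ext a
    simp only [Finset.mem_filter, Finset.mem_univ, true_and, hins, aux1 hinotlt hiU]
  have hP0set : (Finset.univ.filter (fun E' : Finset (Fin k) =>
      ¬ (i ∈ E') ∧ E' ∩ ltm k m = U)) = Finset.univ.filter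
      (fun E' : Finset (Fin k) => E' ∩ ltm k (m + 1) = U) := by
    ext a
    simp only [Finset.mem_filter, Finset.mem_univ, true_and, hins, aux2 hinotlt hiU]
  have hPsplit : P = Q + P0 := by
    have hsum := Finset.sum_filter_add_sum_filter_not
      (Finset.univ.filter (fun E' : Finset (Fin k) => E' ∩ ltm k m = U))
      (fun E' => i ∈ E') μ
    rw [Finset.filter_filter, Finset.filter_filter] at hsum
    have e1 : Finset.filter (fun a : Finset (Fin k) => a ∩ ltm k m = U ∧ i ∈ a)
        Finset.univ = Finset.univ.filter
        (fun E' : Finset (Fin k) => E' ∩ ltm k (m + 1) = insert i U) := by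
      rw [← hQset]; apply Finset.filter_congr; intro a _; constructor <;> (intro h; exact ⟨h.2, h.1⟩)
    have e2 : Finset.filter (fun a : Finset (Fin k) => a ∩ ltm k m = U ∧ ¬ (i ∈ a))
        Finset.univ = Finset.univ.filter
        (fun E' : Finset (Fin k) => E' ∩ ltm k (m + 1) = U) := by
      rw [← hP0set]; apply Finset.filter_congr; intro a _; constructor <;> (intro h; exact ⟨h.2, h.1⟩)
    rw [e1, e2] at hsum
    rw [hPdef, hQdef, hP0def, ← hsum]
  -- conditional bound
  have hQ : q * P ≤ Q := by
    rcases lt_or_ge 0 P with hP | hP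
    · have hc := hcond i U (by rw [hlt]; exact hUsub) (by rw [hlt]; exact hP)
      rw [hlt] at hc
      rw [hQset] at hc
      exact hc
    · have hQ0 : 0 ≤ Q := Finset.sum_nonneg fun E' _ => hμ0 E'
      have : q * P ≤ 0 := mul_nonpos_of_nonneg_of_nonpos hq0 hP
      linarith
  -- S0 ≤ S1
  have hS : ∑ E ∈ A0, t E ≤ ∑ E ∈ A1, t E := by
    have hinj : ∀ x ∈ A0, ∀ y ∈ A0, insert i x = insert i y → x = y := by
      intro x hx y hy hxy
      have hix : i ∉ x := (hmemA0 x hx).2.2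
      have hiy : i ∉ y := (hmemA0 y hy).2.2
      rw [← Finset.erase_insert hix, ← Finset.erase_insert hiy, hxy]
    have himg : ∑ E ∈ A0.image (insert i), t E = ∑ E ∈ A0, t (insert i E) :=
      Finset.sum_image hinj
    have hteq : ∀ E ∈ A0, t (insert i E) = t E := by
      intro E hE
      have h5 : insert i E \ ltm k (m + 1) = E \ ltm k (m + 1) :=
        Finset.insert_sdiff_of_mem E hiin
      simp only [htdef, h5]
    have hsub : A0.image (insert i) ⊆ A1 := by
      intro E' hE'
      rcases Finset.mem_image.1 hE' with ⟨E, hE, rfl⟩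
      obtain ⟨hEF, hEU, hiE⟩ := hmemA0 E hE
      refine Finset.mem_filter.2 ⟨Finset.mem_filter.2 ⟨hF E hEF _ (Finset.subset_insert i E), ?_⟩,
        Finset.mem_insert_self i E⟩
      rw [Finset.insert_inter_of_notMem hinotlt]; exact hEU
    calc ∑ E ∈ A0, t E = ∑ E ∈ A0.image (insert i), t E := by
          rw [himg]; exact (Finset.sum_congr rfl hteq).symm
      _ ≤ ∑ E ∈ A1, t E := Finset.sum_le_sum_of_subset_of_nonneg hsub fun E _ _ => ht E
  -- put it together
  have hS1 : (0:ℝ) ≤ ∑ E ∈ A1, t E := Finset.sum_nonneg fun E _ => ht E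
  have lhs_eq : ∑ E ∈ Fib, w k q μ m E
      = (P * q) * (∑ E ∈ A1, t E) + (P * (1 - q)) * (∑ E ∈ A0, t E) := by
    rw [← Finset.sum_filter_add_sum_filter_not Fib (fun E => i ∈ E) (w k q μ m),
      Finset.sum_congr rfl hA1m, Finset.sum_congr rfl hA0m,
      ← Finset.mul_sum, ← Finset.mul_sum]
  have rhs_eq : ∑ E ∈ Fib, w k q μ (m + 1) E
      = Q * (∑ E ∈ A1, t E) + P0 * (∑ E ∈ A0, t E) := by
    rw [← Finset.sum_filter_add_sum_filter_not Fib (fun E => i ∈ E) (w k q μ (m + 1)),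
      Finset.sum_congr rfl hA1s, Finset.sum_congr rfl hA0s,
      ← Finset.mul_sum, ← Finset.mul_sum]
  rw [lhs_eq, rhs_eq]
  nlinarith [mul_nonneg (sub_nonneg.2 hQ) (sub_nonneg.2 hS), hPsplit]

theorem main (k : ℕ) (q : ℝ) (hq0 : 0 ≤ q) (hq1 : q ≤ 1)
    (μ : Finset (Fin k) → ℝ)
    (hμ0 : ∀ E, 0 ≤ μ E)
    (hμ1 : ∑ E : Finset (Fin k), μ E = 1)
    (hcond : ∀ i : Fin k, ∀ U : Finset (Fin k),
      U ⊆ Finset.univ.filter (fun j : Fin k => j < i) →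
      0 < (∑ E ∈ Finset.univ.filter (fun E : Finset (Fin k) =>
            E ∩ Finset.univ.filter (fun j : Fin k => j < i) = U), μ E) →
      (∑ E ∈ Finset.univ.filter (fun E : Finset (Fin k) =>
            i ∈ E ∧ E ∩ Finset.univ.filter (fun j : Fin k => j < i) = U), μ E) ≥
        q * ∑ E ∈ Finset.univ.filter (fun E : Finset (Fin k) =>
            E ∩ Finset.univ.filter (fun j : Fin k => j < i) = U), μ E)
    (F : Finset (Finset (Fin k)))
    (hF : ∀ U ∈ F, ∀ V : Finset (Fin k), U ⊆ V → V ∈ F) :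
    ∑ E ∈ F, μ E ≥ ∑ E ∈ F, q ^ E.card * (1 - q) ^ (k - E.card) := by
  have key : ∀ m, m ≤ k → ∑ E ∈ F, w k q μ 0 E ≤ ∑ E ∈ F, w k q μ m E := by
    intro m
    induction m with
    | zero => intro _; exact le_refl _
    | succ n ih =>
      intro hn
      exact le_trans (ih (by omega)) (step k q hq0 hq1 μ hμ0 hcond F hF n (by omega))
  have h0 : ∑ E ∈ F, w k q μ 0 E = ∑ E ∈ F, q ^ E.card * (1 - q) ^ (k - E.card) :=
    Finset.sum_congr rfl (fun E _ => w_zero k q μ hμ1 E)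
  have hk : ∑ E ∈ F, w k q μ k E = ∑ E ∈ F, μ E :=
    Finset.sum_congr rfl (fun E _ => w_self k q μ E)
  calc ∑ E ∈ F, q ^ E.card * (1 - q) ^ (k - E.card) = ∑ E ∈ F, w k q μ 0 E := h0.symm
    _ ≤ ∑ E ∈ F, w k q μ k E := key k le_rfl
    _ = ∑ E ∈ F, μ E := hk

end SDAux

theorem stochastic_domination_upward_closed
    (k : ℕ) (q : ℝ) (hq0 : 0 ≤ q) (hq1 : q ≤ 1)
    (μ : Finset (Fin k) → ℝ)
    (hμ0 : ∀ E, 0 ≤ μ E)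
    (hμ1 : ∑ E : Finset (Fin k), μ E = 1)
    (hcond : ∀ i : Fin k, ∀ U : Finset (Fin k),
      U ⊆ Finset.univ.filter (fun j : Fin k => j < i) →
      0 < (∑ E ∈ Finset.univ.filter (fun E : Finset (Fin k) =>
            E ∩ Finset.univ.filter (fun j : Fin k => j < i) = U), μ E) →
      (∑ E ∈ Finset.univ.filter (fun E : Finset (Fin k) =>
            i ∈ E ∧ E ∩ Finset.univ.filter (fun j : Fin k => j < i) = U), μ E) ≥
        q * ∑ E ∈ Finset.univ.filter (fun E : Finset (Fin k) =>
            E ∩ Finset.univ.filter (fun j : Fin k => j < i) = U), μ E) :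
    ∀ F : Finset (Finset (Fin k)),
      (∀ U ∈ F, ∀ V : Finset (Fin k), U ⊆ V → V ∈ F) →
      ∑ E ∈ F, μ E ≥ ∑ E ∈ F, q ^ E.card * (1 - q) ^ (k - E.card) := by
  intro F hF
  exact SDAux.main k q hq0 hq1 μ hμ0 hμ1 hcond F hF
end
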